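/- arXiv:2604.20147 — 5 statements merged into one kernel-verified Lean document; each statement's English description precedes it below -/
import Mathlib

section
/- For any real q > 0, the empirical mean embedding satisfies the moment bound E[‖μ̂ − μ_P‖_H^q] ≤ √(4πq) · (4Cq/(e·n))^{q/2} · e^{1/(6q)}, where e is Euler's number and the expectation is over the n i.i.d. samples from P. -/
/-!
With `Y ξ = n⁻¹ • (φ ξ - μ_P)` the error is `μ̂ - μ_P = ∑ⱼ Y ξⱼ`, a sum of independent centred
`H`-valued terms of norm at most `b = 2√C / n`. Following Pinelis, `v ↦ cosh (L √v)` is convex, so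
bounding it by its chord over `[(‖s‖ - b)², (‖s‖ + b)²]` and averaging kills the term linear in `Y`:
`E cosh (L ‖s + Y‖) ≤ cosh (L ‖s‖) cosh (L b)`. Peeling off one sample at a time gives
`E cosh (L ‖∑ Y‖) ≤ cosh (L b) ^ n ≤ exp (L² n b² / 2)`, hence by Chernoff the tail bound
`P (‖∑ Y‖ ≥ t) ≤ 2 exp (-t² / (2 n b²))`, and integrating it (layer cake) gives
`E ‖∑ Y‖ ^ q ≤ q (8C/n) ^ (q/2) Γ(q/2)`. It remains to bound `Γ(q/2)` by Stirling's formula with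
Robbins' error term, `Γ(x) ≤ √(2π/x) (x/e)^x e^(1/(12x))` for every real `x > 0`: the remainder
`R x = log Γ(x) - ((x - 1/2) log x - x + log (2π) / 2)` satisfies
`R x - R (x+1) ≤ 1/(12x) - 1/(12(x+1))` (compare the series of `log (1 + 1/x)` with a geometric
one), and `R (x + n) → 0` by log-convexity of `Γ` and Stirling's formula at the integers.
-/

open MeasureTheory

noncomputable def empEmb {Ξ H : Type*} [NormedAddCommGroup H] [InnerProductSpace ℝ H]
    (φ : Ξ → H) {n : ℕ} (x : Fin n → Ξ) : H := (n : ℝ)⁻¹ • ∑ j, φ (x j)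

open Real Set Filter Topology

namespace Real

theorem sinh_le_mul_cosh {y : ℝ} (hy : 0 ≤ y) : sinh y ≤ y * cosh y := by
  have hmono : MonotoneOn (fun y => y * cosh y - sinh y) (Ici 0) := by
    refine monotoneOn_of_hasDerivWithinAt_nonneg (convex_Ici 0) (by fun_prop)
      (fun z _ => (((hasDerivAt_id' z).mul (hasDerivAt_cosh z)).sub
        (hasDerivAt_sinh z)).hasDerivWithinAt) fun z hz => ?_
    rw [interior_Ici] at hz
    nlinarith [mul_nonneg hz.out.le (sinh_nonneg_iff.mpr hz.out.le)]
  simpa using hmono self_mem_Ici hy hy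

theorem monotoneOn_sinh_div_self : MonotoneOn (fun y => sinh y / y) (Ioi 0) := by
  refine monotoneOn_of_hasDerivWithinAt_nonneg (convex_Ioi 0)
    (continuous_sinh.continuousOn.div continuousOn_id fun y hy => hy.out.ne')
    (fun z hz => ((hasDerivAt_sinh z).div (hasDerivAt_id' z)
      (interior_subset hz).out.ne').hasDerivWithinAt) fun z hz => ?_
  rw [interior_Ioi] at hz
  have := sinh_le_mul_cosh hz.out.le
  exact div_nonneg (by linarith) (sq_nonneg z)

theorem convexOn_cosh_mul_sqrt (L : ℝ) : ConvexOn ℝ (Ici 0) fun v => cosh (L * √v) := by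
  have habs : (fun v => cosh (L * √v)) = fun v => cosh (|L| * √v) := by
    ext v
    rw [← cosh_abs, abs_mul, abs_of_nonneg (sqrt_nonneg v)]
  rw [habs]
  rcases (abs_nonneg L).eq_or_lt with hL | hL
  · simpa [← hL] using convexOn_const (1 : ℝ) (convex_Ici 0)
  have hderiv (v : ℝ) (hv : 0 < v) : HasDerivAt (fun v => cosh (|L| * √v))
      (sinh (|L| * √v) / (|L| * √v) * (|L| ^ 2 / 2)) v := by
    refine ((hasDerivAt_cosh _).comp v ((hasDerivAt_sqrt hv.ne').const_mul |L|)).congr_deriv ?_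
    have := sqrt_pos.mpr hv
    field_simp
  refine MonotoneOn.convexOn_of_deriv (convex_Ici 0) (by fun_prop)
    (fun v hv => (hderiv v (by simpa using hv)).differentiableAt.differentiableWithinAt) ?_
  rw [interior_Ici]
  intro v hv w hw hvw
  rw [(hderiv v hv).deriv, (hderiv w hw).deriv]
  gcongr ?_ * _
  exact monotoneOn_sinh_div_self (mul_pos hL (sqrt_pos.mpr hv)) (mul_pos hL (sqrt_pos.mpr hw))
    (by gcongr)

end Real

theorem ConvexOn.le_midpoint_add_mul_slope {S : Set ℝ} {g : ℝ → ℝ} (hg : ConvexOn ℝ S g)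
    {c a w : ℝ} (hl : c - a ∈ S) (hr : c + a ∈ S) (hw : |w| ≤ a) :
    g (c + w) ≤ (g (c - a) + g (c + a)) / 2 + w * ((g (c + a) - g (c - a)) / (2 * a)) := by
  rcases ((abs_nonneg w).trans hw).eq_or_lt with rfl | ha
  · simp [abs_nonpos_iff.mp hw]
  have hw' := abs_le.mp hw
  have hcomb := hg.2 hl hr (div_nonneg (by linarith : 0 ≤ a - w) (by positivity : 0 ≤ 2 * a))
    (div_nonneg (by linarith : 0 ≤ a + w) (by positivity : 0 ≤ 2 * a)) (by field_simp; ring)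
  simp only [smul_eq_mul] at hcomb
  rw [show (a - w) / (2 * a) * (c - a) + (a + w) / (2 * a) * (c + a) = c + w by
    field_simp; ring] at hcomb
  refine hcomb.trans_eq ?_
  field_simp
  ring

section Moments

variable {α : Type*} [MeasurableSpace α] {μ : Measure α}

theorem measure_le_le_two_mul_exp_of_integral_cosh_le [IsFiniteMeasure μ] {f : α → ℝ}
    {σ2 : ℝ} (hσ : 0 < σ2) (hint : ∀ L, Integrable (fun ω => cosh (L * f ω)) μ)
    (hmgf : ∀ L, ∫ ω, cosh (L * f ω) ∂μ ≤ exp (L ^ 2 * σ2 / 2)) {t : ℝ} (ht : 0 ≤ t) :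
    μ {ω | t ≤ f ω} ≤ ENNReal.ofReal (2 * exp (-t ^ 2 / (2 * σ2))) := by
  set L := t / σ2
  have hL : 0 ≤ L := by positivity
  have hsub : {ω | t ≤ f ω} ⊆ {ω | cosh (L * t) ≤ cosh (L * f ω)} := fun ω hω => by
    change cosh (L * t) ≤ cosh (L * f ω)
    rw [cosh_le_cosh, abs_of_nonneg (by positivity)]
    exact (mul_le_mul_of_nonneg_left hω hL).trans (le_abs_self _)
  have hmarkov := mul_meas_ge_le_integral_of_nonneg (ae_of_all _ fun ω => (cosh_pos _).le)
    (hint L) (cosh (L * t))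
  have hcosh : exp (L * t) / 2 ≤ cosh (L * t) := by
    rw [cosh_eq]
    linarith [exp_pos (-(L * t))]
  rw [← ENNReal.ofReal_toReal (measure_ne_top μ _)]
  refine ENNReal.ofReal_le_ofReal ?_
  calc μ.real {ω | t ≤ f ω} ≤ μ.real {ω | cosh (L * t) ≤ cosh (L * f ω)} := measureReal_mono hsub
    _ ≤ exp (L ^ 2 * σ2 / 2) / cosh (L * t) := by
        rw [le_div_iff₀ (cosh_pos _)]
        linarith [hmgf L]
    _ ≤ exp (L ^ 2 * σ2 / 2) / (exp (L * t) / 2) := by gcongr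
    _ = 2 * exp (-t ^ 2 / (2 * σ2)) := by
        rw [div_div_eq_mul_div, mul_comm, mul_div_assoc, ← exp_sub]
        congr 2
        simp only [L]
        field_simp
        ring

theorem integral_rpow_mul_exp_neg_sq_div {σ2 : ℝ} (hσ : 0 < σ2) {q : ℝ} (hq : 0 < q) :
    ∫ t in Ioi (0 : ℝ), t ^ (q - 1) * exp (-t ^ 2 / (2 * σ2)) =
      (2 * σ2) ^ (q / 2) * Gamma (q / 2) / 2 := by
  have h := integral_rpow_mul_exp_neg_mul_rpow (p := 2) (q := q - 1) (b := (2 * σ2)⁻¹)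
    two_pos (by linarith) (by positivity)
  have hfun : (fun t : ℝ => t ^ (q - 1) * exp (-t ^ 2 / (2 * σ2))) =
      fun t => t ^ (q - 1) * exp (-(2 * σ2)⁻¹ * t ^ (2 : ℝ)) := by
    ext t
    rw [rpow_two, neg_mul, ← div_eq_inv_mul, neg_div]
  rw [hfun, h, sub_add_cancel, neg_div, rpow_neg (by positivity), inv_rpow (by positivity), inv_inv]
  ring

theorem integral_rpow_le_of_measure_le_le {f : α → ℝ} (hfm : AEMeasurable f μ)
    (hf0 : 0 ≤ᵐ[μ] f) {σ2 : ℝ} (hσ : 0 < σ2)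
    (htail : ∀ t, 0 < t → μ {ω | t ≤ f ω} ≤ ENNReal.ofReal (2 * exp (-t ^ 2 / (2 * σ2))))
    {q : ℝ} (hq : 0 < q) :
    ∫ ω, f ω ^ q ∂μ ≤ q * (2 * σ2) ^ (q / 2) * Gamma (q / 2) := by
  set h : ℝ → ℝ := fun t => 2 * (t ^ (q - 1) * exp (-t ^ 2 / (2 * σ2)))
  have hh : ∫ t in Ioi 0, h t = (2 * σ2) ^ (q / 2) * Gamma (q / 2) := by
    rw [integral_const_mul, integral_rpow_mul_exp_neg_sq_div hσ hq]
    ring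
  have hh0 : ∀ t ∈ Ioi (0 : ℝ), 0 ≤ h t := fun t ht => by
    have := rpow_nonneg (le_of_lt ht) (q - 1)
    positivity
  have hlayer : ∫⁻ ω, ENNReal.ofReal (f ω ^ q) ∂μ ≤
      ENNReal.ofReal q * ∫⁻ t in Ioi 0, ENNReal.ofReal (h t) := by
    rw [lintegral_rpow_eq_lintegral_meas_le_mul μ hf0 hfm hq]
    gcongr ENNReal.ofReal q * ?_
    refine setLIntegral_mono' measurableSet_Ioi fun t ht => ?_
    rw [show h t = 2 * exp (-t ^ 2 / (2 * σ2)) * t ^ (q - 1) by ring,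
      ENNReal.ofReal_mul (by positivity)]
    exact mul_le_mul_left (htail t ht) _
  have hint : IntegrableOn h (Ioi 0) := by
    refine IntegrableOn.congr_fun ((integrableOn_rpow_mul_exp_neg_mul_sq (b := (2 * σ2)⁻¹)
      (by positivity) (by linarith : -1 < q - 1)).const_mul 2) (fun t _ => ?_) measurableSet_Ioi
    simp [h, div_eq_inv_mul]
  rw [← ofReal_integral_eq_lintegral_ofReal hint ((ae_restrict_iff' measurableSet_Ioi).mpr
    (ae_of_all _ hh0)), hh, ← ENNReal.ofReal_mul hq.le] at hlayer
  rw [integral_eq_lintegral_of_nonneg_ae (hf0.mono fun ω hω => rpow_nonneg hω q)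
    (hfm.pow_const q).aestronglyMeasurable, mul_assoc]
  exact ENNReal.toReal_le_of_le_ofReal (by positivity) hlayer

end Moments

noncomputable def stirlingRemainder (x : ℝ) : ℝ :=
  log (Gamma x) - ((x - 1 / 2) * log x - x + log (2 * π) / 2)

theorem stirlingRemainder_sub_stirlingRemainder_add_one {x : ℝ} (hx : 0 < x) :
    stirlingRemainder x - stirlingRemainder (x + 1) = (x + 1 / 2) * log (1 + x⁻¹) - 1 := by
  rw [stirlingRemainder, stirlingRemainder, Gamma_add_one hx.ne',
    log_mul hx.ne' (Gamma_pos_of_pos hx).ne', show 1 + x⁻¹ = (x + 1) / x by field_simp,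
    log_div (by positivity) hx.ne']
  ring

theorem add_half_mul_log_one_add_inv_sub_one_le {x : ℝ} (hx : 0 < x) :
    (x + 1 / 2) * log (1 + x⁻¹) - 1 ≤ 1 / (12 * x) - 1 / (12 * (x + 1)) := by
  set r := 1 / (2 * x + 1) with hr
  have hr0 : 0 < r := by positivity
  have hxr : (x + 1 / 2) * 2 * r = 1 := by
    rw [hr]
    field_simp
  have hr1 : 1 - r ^ 2 = 4 * x * (x + 1) * r ^ 2 := by
    rw [hr]
    field_simp
    ring
  have hs : HasSum (fun k : ℕ => 1 / (2 * k + 1) * (r ^ 2) ^ k) ((x + 1 / 2) * log (1 + x⁻¹)) := by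
    have key (k : ℕ) : (x + 1 / 2) * (2 * (1 / (2 * k + 1)) * r ^ (2 * k + 1)) =
        1 / (2 * k + 1) * (r ^ 2) ^ k := by
      calc _ = (x + 1 / 2) * 2 * r * (1 / (2 * k + 1) * (r ^ 2) ^ k) := by ring
        _ = _ := by rw [hxr, one_mul]
    have h := (hasSum_log_one_add_inv hx).mul_left (x + 1 / 2)
    rw [← hr] at h
    simpa only [key] using h
  rw [← hasSum_nat_add_iff' 1, Finset.sum_range_one] at hs
  have hgeom := ((hasSum_geometric_of_lt_one (sq_nonneg r) (by nlinarith)).mul_left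
    (r ^ 2)).div_const 3
  simp only [← pow_succ'] at hgeom
  have hle := hasSum_le (fun k => ?_) hs hgeom
  · have hval : r ^ 2 * (1 - r ^ 2)⁻¹ / 3 = 1 / (12 * x) - 1 / (12 * (x + 1)) := by
      rw [hr1]
      field_simp
      ring
    simp only [CharP.cast_eq_zero, mul_zero, zero_add, div_one, pow_zero, mul_one] at hle
    linarith
  · have : (3 : ℝ) ≤ 2 * ↑(k + 1) + 1 := by
      push_cast
      linarith [k.cast_nonneg (α := ℝ)]
    rw [one_div_mul_eq_div]
    gcongr

theorem stirlingRemainder_sub_le_add_natCast {x : ℝ} (hx : 0 < x) (n : ℕ) :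
    stirlingRemainder x - 1 / (12 * x) ≤ stirlingRemainder (x + n) - 1 / (12 * (x + n)) := by
  induction n with
  | zero => simp
  | succ n ih =>
    have hxn : 0 < x + n := by positivity
    have h1 := stirlingRemainder_sub_stirlingRemainder_add_one hxn
    have h2 := add_half_mul_log_one_add_inv_sub_one_le hxn
    rw [Nat.cast_succ, ← add_assoc]
    linarith

theorem stirlingRemainder_natCast {m : ℕ} (hm : m ≠ 0) :
    stirlingRemainder m = log (Stirling.stirlingSeq m) - log √π := by
  obtain ⟨k, rfl⟩ := Nat.exists_eq_succ_of_ne_zero hm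
  have hk : (0 : ℝ) < k + 1 := by positivity
  rw [stirlingRemainder, Stirling.log_stirlingSeq_formula, Nat.factorial_succ, Nat.cast_mul,
    Nat.cast_succ, Gamma_nat_eq_factorial, log_mul hk.ne' (by positivity),
    log_mul two_ne_zero hk.ne', log_div hk.ne' (exp_ne_zero 1), log_exp,
    log_sqrt pi_pos.le, log_mul two_ne_zero pi_ne_zero]
  ring

theorem tendsto_stirlingRemainder_natCast :
    Tendsto (fun m : ℕ => stirlingRemainder m) atTop (𝓝 0) := by
  have h := ((continuousAt_log (sqrt_pos.mpr pi_pos).ne').tendsto.comp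
    Stirling.tendsto_stirlingSeq_sqrt_pi).sub_const (log √π)
  rw [sub_self] at h
  refine h.congr' ?_
  filter_upwards [eventually_ne_atTop 0] with m hm
  exact (stirlingRemainder_natCast hm).symm

theorem stirlingRemainder_le_natFloor {y : ℝ} (hy : 1 ≤ y) :
    stirlingRemainder y ≤ stirlingRemainder ⌊y⌋₊ + 1 / (2 * ⌊y⌋₊) := by
  set m := ⌊y⌋₊
  have hm : (0 : ℝ) < m := by exact_mod_cast Nat.floor_pos.mpr hy
  have hy0 : 0 < y := by linarith
  have hmy : (m : ℝ) ≤ y := Nat.floor_le hy0.le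
  have hym : y - m ≤ 1 := by linarith [Nat.lt_floor_add_one y]
  have hlogΓ : log (Gamma y) ≤ log (Gamma m) + (y - m) * log m := by
    have h := convexOn_log_Gamma.2 (mem_Ioi.mpr hm) (mem_Ioi.mpr (by linarith : (0 : ℝ) < m + 1))
      (sub_nonneg.mpr hym) (sub_nonneg.mpr hmy) (by ring)
    rw [smul_eq_mul, smul_eq_mul, show (1 - (y - m)) * m + (y - m) * (m + 1) = y by ring] at h
    simp only [Function.comp_apply, Gamma_add_one hm.ne',
      log_mul hm.ne' (Gamma_pos_of_pos hm).ne', smul_eq_mul] at h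
    linarith
  have hlog : (y - m) / y ≤ log y - log m := by
    have h := log_le_sub_one_of_pos (show 0 < (m : ℝ) / y by positivity)
    rw [log_div hm.ne' hy0.ne'] at h
    have : (m : ℝ) / y - 1 = -((y - m) / y) := by field_simp; ring
    linarith
  have hprod := mul_le_mul_of_nonneg_left hlog (by linarith : 0 ≤ y - 1 / 2)
  have : (y - m) - (y - 1 / 2) * ((y - m) / y) ≤ 1 / (2 * m) := by
    rw [show (y - m) - (y - 1 / 2) * ((y - m) / y) = (y - m) / (2 * y) by field_simp; ring]
    exact div_le_div₀ zero_le_one hym (by positivity) (by linarith)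
  simp only [stirlingRemainder]
  linarith

theorem stirlingRemainder_le {x : ℝ} (hx : 0 < x) : stirlingRemainder x ≤ 1 / (12 * x) := by
  set u : ℕ → ℝ := fun m => stirlingRemainder m + 1 / (2 * m)
  have hu : Tendsto u atTop (𝓝 0) := by
    simpa using tendsto_stirlingRemainder_natCast.add
      ((tendsto_const_div_atTop_nhds_zero_nat (1 / 2 : ℝ)).congr fun m => by rw [div_div])
  have hfloor : Tendsto (fun n : ℕ => ⌊x + n⌋₊) atTop atTop :=
    tendsto_nat_floor_atTop.comp (tendsto_atTop_add_const_left atTop x tendsto_natCast_atTop_atTop)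
  refine sub_nonpos.mp (ge_of_tendsto (hu.comp hfloor) ?_)
  filter_upwards [eventually_ge_atTop 1] with n hn
  have hxn : 1 ≤ x + n := by linarith [(Nat.one_le_cast (α := ℝ)).mpr hn]
  have h1 := stirlingRemainder_sub_le_add_natCast hx n
  have h2 := stirlingRemainder_le_natFloor hxn
  have h3 : 0 ≤ 1 / (12 * (x + n)) := by positivity
  simp only [Function.comp_apply, u]
  linarith

theorem Gamma_le_stirling {x : ℝ} (hx : 0 < x) :
    Gamma x ≤ √(2 * π / x) * (x / exp 1) ^ x * exp (1 / (12 * x)) := by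
  have hR := stirlingRemainder_le hx
  rw [stirlingRemainder, sub_le_iff_le_add, ← exp_le_exp, exp_log (Gamma_pos_of_pos hx)] at hR
  refine hR.trans_eq ?_
  rw [sqrt_eq_rpow, rpow_def_of_pos (by positivity), rpow_def_of_pos (by positivity), ← exp_add,
    ← exp_add, log_div (by positivity) hx.ne', log_div hx.ne' (exp_ne_zero 1), log_exp]
  congr 1
  ring

theorem mul_rpow_mul_Gamma_half_le {q V : ℝ} (hq : 0 < q) (hV : 0 ≤ V) :
    q * V ^ (q / 2) * Gamma (q / 2) ≤
      √(4 * π * q) * (V * q / (2 * exp 1)) ^ (q / 2) * exp (1 / (6 * q)) := by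
  have hsqrt : q * √(2 * π / (q / 2)) = √(4 * π * q) := by
    rw [show 4 * π * q = q ^ 2 * (2 * π / (q / 2)) by field_simp; ring, sqrt_mul (sq_nonneg q),
      sqrt_sq hq.le]
  calc q * V ^ (q / 2) * Gamma (q / 2)
      ≤ q * V ^ (q / 2) * (√(2 * π / (q / 2)) * (q / 2 / exp 1) ^ (q / 2) *
          exp (1 / (12 * (q / 2)))) := by
        gcongr
        exact Gamma_le_stirling (by positivity)
    _ = q * √(2 * π / (q / 2)) * (V ^ (q / 2) * (q / 2 / exp 1) ^ (q / 2)) *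
          exp (1 / (12 * (q / 2))) := by ring
    _ = √(4 * π * q) * (V * q / (2 * exp 1)) ^ (q / 2) * exp (1 / (6 * q)) := by
        rw [hsqrt, ← mul_rpow hV (by positivity)]
        congr 3 <;> ring

section Hilbert

variable {H : Type*} [NormedAddCommGroup H]

theorem integrable_cosh_mul_norm {α : Type*} [MeasurableSpace α] {μ : Measure α}
    [IsFiniteMeasure μ] {F : α → H} (hF : AEStronglyMeasurable F μ) {M : ℝ}
    (hM : ∀ a, ‖F a‖ ≤ M) (L : ℝ) : Integrable (fun a => cosh (L * ‖F a‖)) μ := by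
  refine Integrable.of_bound (by fun_prop) (cosh (L * M)) (ae_of_all _ fun a => ?_)
  rw [norm_eq_abs, abs_of_pos (cosh_pos _), cosh_le_cosh, abs_mul, abs_mul, abs_norm]
  gcongr
  exact (hM a).trans (le_abs_self M)

theorem norm_sub_integral_le_two_mul [NormedSpace ℝ H] {Ξ : Type*} [MeasurableSpace Ξ]
    {P : Measure Ξ} [IsProbabilityMeasure P] {φ : Ξ → H} {M : ℝ} (hφ : ∀ ξ, ‖φ ξ‖ ≤ M) (ξ : Ξ) :
    ‖φ ξ - ∫ ξ, φ ξ ∂P‖ ≤ 2 * M := by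
  have := norm_integral_le_of_norm_le_const (μ := P) (ae_of_all _ hφ)
  rw [probReal_univ, mul_one] at this
  linarith [norm_sub_le (φ ξ) (∫ ξ, φ ξ ∂P), hφ ξ]

variable [InnerProductSpace ℝ H]

theorem exists_cosh_mul_norm_add_le (L b : ℝ) (s : H) :
    ∃ K : ℝ, ∀ x : H, ‖x‖ ≤ b →
      cosh (L * ‖s + x‖) ≤ cosh (L * ‖s‖) * cosh (L * b) + K * inner ℝ s x := by
  set g : ℝ → ℝ := fun v => cosh (L * √v)
  set c := ‖s‖ ^ 2 + b ^ 2
  set a := 2 * (‖s‖ * b)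
  refine ⟨2 * ((g (c + a) - g (c - a)) / (2 * a)), fun x hx => ?_⟩
  have hw : |2 * inner ℝ s x| ≤ a := by
    have := (abs_real_inner_le_norm s x).trans (mul_le_mul_of_nonneg_left hx (norm_nonneg s))
    rw [abs_mul, abs_two]
    linarith
  have hsq : ‖s + x‖ ^ 2 ≤ c + 2 * inner ℝ s x := by
    rw [norm_add_sq_real]
    have : ‖x‖ ^ 2 ≤ b ^ 2 := pow_le_pow_left₀ (norm_nonneg x) hx 2
    linarith
  have hmono : cosh (L * ‖s + x‖) ≤ g (c + 2 * inner ℝ s x) := by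
    rw [cosh_le_cosh, abs_mul, abs_mul, abs_norm, abs_of_nonneg (sqrt_nonneg _)]
    gcongr
    exact le_sqrt_of_sq_le hsq
  have hca : c - a = (‖s‖ - b) ^ 2 := by ring
  have hcb : c + a = (‖s‖ + b) ^ 2 := by ring
  have hmid : (g (c - a) + g (c + a)) / 2 = cosh (L * ‖s‖) * cosh (L * b) := by
    have hL (y : ℝ) : cosh (L * |y|) = cosh (L * y) := by
      rw [← cosh_abs, abs_mul, abs_abs, ← abs_mul, cosh_abs]
    simp only [g, hca, hcb, sqrt_sq_eq_abs, hL, mul_sub, mul_add, cosh_sub, cosh_add]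
    ring
  have hchord := (convexOn_cosh_mul_sqrt L).le_midpoint_add_mul_slope (c := c) (a := a)
    (by rw [hca, mem_Ici]; positivity) (by rw [hcb, mem_Ici]; positivity) hw
  rw [hmid] at hchord
  linarith

variable [CompleteSpace H] {Ξ : Type*} [MeasurableSpace Ξ]

theorem integral_cosh_mul_norm_add_le {ν : Measure Ξ} [IsProbabilityMeasure ν] {Y : Ξ → H}
    (hYi : Integrable Y ν) {b : ℝ} (hYb : ∀ ξ, ‖Y ξ‖ ≤ b) (hY0 : ∫ ξ, Y ξ ∂ν = 0)
    (L : ℝ) (s : H) :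
    ∫ ξ, cosh (L * ‖s + Y ξ‖) ∂ν ≤ cosh (L * ‖s‖) * cosh (L * b) := by
  obtain ⟨K, hK⟩ := exists_cosh_mul_norm_add_le L b s
  have hi : Integrable (fun ξ => K * inner ℝ s (Y ξ)) ν := (hYi.const_inner s).const_mul K
  calc ∫ ξ, cosh (L * ‖s + Y ξ‖) ∂ν
      ≤ ∫ ξ, (cosh (L * ‖s‖) * cosh (L * b) + K * inner ℝ s (Y ξ)) ∂ν :=
        integral_mono_of_nonneg (ae_of_all _ fun ξ => (cosh_pos _).le)
          ((integrable_const _).add hi) (ae_of_all _ fun ξ => hK _ (hYb ξ))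
    _ = cosh (L * ‖s‖) * cosh (L * b) := by
        rw [integral_add (integrable_const _) hi, integral_const_mul K, integral_inner hYi, hY0]
        simp

theorem integral_cosh_mul_norm_add_sum_le {P : Measure Ξ} [IsProbabilityMeasure P] {Y : Ξ → H}
    (hYm : StronglyMeasurable Y) {b : ℝ} (hYb : ∀ ξ, ‖Y ξ‖ ≤ b) (hY0 : ∫ ξ, Y ξ ∂P = 0)
    (L : ℝ) (n : ℕ) (s : H) :
    ∫ x, cosh (L * ‖s + ∑ j, Y (x j)‖) ∂(Measure.pi fun _ : Fin n => P) ≤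
      cosh (L * ‖s‖) * cosh (L * b) ^ n := by
  have hYi : Integrable Y P := Integrable.of_bound hYm.aestronglyMeasurable b (ae_of_all _ hYb)
  induction n generalizing s with
  | zero => simp
  | succ n ih =>
    set g : Ξ × (Fin n → Ξ) → ℝ := fun p => cosh (L * ‖s + Y p.1 + ∑ j, Y (p.2 j)‖)
    have hg : Integrable g (P.prod (Measure.pi fun _ => P)) := by
      refine integrable_cosh_mul_norm (M := ‖s‖ + b + n * b) (by fun_prop) (fun p => ?_) L
      refine (norm_add₃_le).trans (add_le_add (add_le_add le_rfl (hYb _)) ?_)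
      exact (norm_sum_le_of_le Finset.univ fun j _ => hYb (p.2 j)).trans_eq (by simp)
    have hsplit : ∫ x, cosh (L * ‖s + ∑ j, Y (x j)‖) ∂(Measure.pi fun _ : Fin (n + 1) => P) =
        ∫ ξ, ∫ z, g (ξ, z) ∂(Measure.pi fun _ => P) ∂P := by
      rw [← integral_prod g hg,
        ← (measurePreserving_piFinSuccAbove (fun _ => P) 0).integral_comp']
      simp [g, Fin.sum_univ_succ, Fin.tail, add_assoc]
    calc _ = ∫ ξ, ∫ z, g (ξ, z) ∂(Measure.pi fun _ => P) ∂P := hsplit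
      _ ≤ ∫ ξ, cosh (L * ‖s + Y ξ‖) * cosh (L * b) ^ n ∂P :=
          integral_mono_of_nonneg (ae_of_all _ fun ξ => integral_nonneg fun z => (cosh_pos _).le)
            ((integrable_cosh_mul_norm (M := ‖s‖ + b) (by fun_prop)
              (fun ξ => (norm_add_le _ _).trans (by linarith [hYb ξ])) L).mul_const _)
            (ae_of_all _ fun ξ => ih (s + Y ξ))
      _ = (∫ ξ, cosh (L * ‖s + Y ξ‖) ∂P) * cosh (L * b) ^ n := integral_mul_const _ _
      _ ≤ cosh (L * ‖s‖) * cosh (L * b) * cosh (L * b) ^ n := by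
          gcongr
          exact integral_cosh_mul_norm_add_le hYi hYb hY0 L s
      _ = cosh (L * ‖s‖) * cosh (L * b) ^ (n + 1) := by ring

theorem integral_norm_sum_rpow_le {P : Measure Ξ} [IsProbabilityMeasure P] {Y : Ξ → H}
    (hYm : StronglyMeasurable Y) {b : ℝ} (hb : 0 < b) (hYb : ∀ ξ, ‖Y ξ‖ ≤ b)
    (hY0 : ∫ ξ, Y ξ ∂P = 0) {n : ℕ} (hn : n ≠ 0) {q : ℝ} (hq : 0 < q) :
    ∫ x, ‖∑ j, Y (x j)‖ ^ q ∂(Measure.pi fun _ : Fin n => P) ≤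
      q * (2 * (n * b ^ 2)) ^ (q / 2) * Gamma (q / 2) := by
  have hSm : StronglyMeasurable fun x : Fin n → Ξ => ∑ j, Y (x j) :=
    Finset.stronglyMeasurable_fun_sum _ fun j _ => hYm.comp_measurable (measurable_pi_apply j)
  have hSb (x : Fin n → Ξ) : ‖∑ j, Y (x j)‖ ≤ n * b :=
    (norm_sum_le_of_le Finset.univ fun j _ => hYb (x j)).trans_eq (by simp)
  have hmgf (L : ℝ) : ∫ x, cosh (L * ‖∑ j, Y (x j)‖) ∂(Measure.pi fun _ : Fin n => P) ≤
      exp (L ^ 2 * (n * b ^ 2) / 2) :=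
    calc _ ≤ cosh (L * ‖(0 : H)‖) * cosh (L * b) ^ n := by
          simpa using integral_cosh_mul_norm_add_sum_le hYm hYb hY0 L n 0
      _ ≤ exp ((L * b) ^ 2 / 2) ^ n := by
          rw [norm_zero, mul_zero, cosh_zero, one_mul]
          gcongr
          exact cosh_le_exp_half_sq _
      _ = exp (L ^ 2 * (n * b ^ 2) / 2) := by
          rw [← exp_nat_mul]
          ring_nf
  exact integral_rpow_le_of_measure_le_le hSm.norm.measurable.aemeasurable
    (ae_of_all _ fun x => norm_nonneg _) (by positivity)
    (fun t ht => measure_le_le_two_mul_exp_of_integral_cosh_le (by positivity)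
      (integrable_cosh_mul_norm hSm.aestronglyMeasurable hSb) hmgf ht.le) hq

end Hilbert

theorem empEmb_sub_eq_sum {Ξ H : Type*} [NormedAddCommGroup H] [InnerProductSpace ℝ H]
    (φ : Ξ → H) {n : ℕ} (hn : n ≠ 0) (m : H) (x : Fin n → Ξ) :
    empEmb φ x - m = ∑ j, (n : ℝ)⁻¹ • (φ (x j) - m) := by
  rw [← Finset.smul_sum, Finset.sum_sub_distrib, smul_sub, empEmb, Finset.sum_const,
    Finset.card_univ, Fintype.card_fin, ← Nat.cast_smul_eq_nsmul ℝ, smul_smul,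
    inv_mul_cancel₀ (Nat.cast_ne_zero.mpr hn), one_smul]

/-- **Moment error bound for the empirical mean embedding.**
For any real `q > 0`, `E[‖μ̂ − μ_P‖^q] ≤ √(4πq) · (4Cq/(e·n))^{q/2} · e^{1/(6q)}`,
the expectation being over the `n` i.i.d. samples from `P` (modeled by the product
measure on `Fin n → Ξ`). -/
theorem moment_error_bound_for_empirical_mean_embedding
    {H : Type*} [NormedAddCommGroup H] [InnerProductSpace ℝ H] [CompleteSpace H]
    {Ξ : Type*} [MeasurableSpace Ξ]
    (C : ℝ) (hC : 0 < C)
    (φ : Ξ → H) (hφm : StronglyMeasurable φ) (hφ : ∀ ξ, ‖φ ξ‖ ^ 2 ≤ C)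
    (P : Measure Ξ) [IsProbabilityMeasure P]
    (n : ℕ) (hn : 0 < n)
    (q : ℝ) (hq : 0 < q) :
    ∫ x : Fin n → Ξ, ‖empEmb φ x - ∫ ξ, φ ξ ∂P‖ ^ q ∂(Measure.pi fun _ : Fin n => P) ≤
      Real.sqrt (4 * Real.pi * q) * (4 * C * q / (Real.exp 1 * n)) ^ (q / 2) *
        Real.exp (1 / (6 * q)) := by
  set μP := ∫ ξ, φ ξ ∂P
  have hφb (ξ : Ξ) : ‖φ ξ‖ ≤ √C := le_sqrt_of_sq_le (hφ ξ)
  have hYb (ξ : Ξ) : ‖(n : ℝ)⁻¹ • (φ ξ - μP)‖ ≤ 2 * √C / n := by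
    rw [norm_smul, norm_inv, Real.norm_natCast, inv_mul_eq_div]
    gcongr
    exact norm_sub_integral_le_two_mul hφb ξ
  have hY0 : ∫ ξ, (n : ℝ)⁻¹ • (φ ξ - μP) ∂P = 0 := by
    rw [integral_smul, integral_sub (Integrable.of_bound hφm.aestronglyMeasurable _
      (ae_of_all _ hφb)) (integrable_const μP)]
    simp [μP]
  have hσ : 2 * (n * (2 * √C / n) ^ 2) = 8 * C / n := by
    field_simp
    rw [sq_sqrt hC.le]
    ring
  simp_rw [empEmb_sub_eq_sum φ hn.ne' μP]
  calc _ ≤ q * (8 * C / n) ^ (q / 2) * Gamma (q / 2) := by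
        rw [← hσ]
        exact integral_norm_sum_rpow_le ((hφm.sub stronglyMeasurable_const).const_smul _)
          (by positivity) hYb hY0 hn.ne' hq
    _ ≤ √(4 * π * q) * (8 * C / n * q / (2 * exp 1)) ^ (q / 2) * exp (1 / (6 * q)) :=
        mul_rpow_mul_Gamma_half_le hq (by positivity)
    _ = _ := by
        rw [show 8 * C / n * q / (2 * exp 1) = 4 * C * q / (exp 1 * n) by field_simp; ring]
end

section
/- For every t ≥ 0, the deviation of the empirical mean embedding satisfies the sub-Gaussian tail bound P(‖μ̂ − μ_P‖_H ≥ t) ≤ 2·exp(−n t² / (8C)), where the probability is over the n i.i.d. samples from P. -/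
/-!
Pinelis' argument. In a Hilbert space the parallelogram law and the convexity of `x ↦ cosh √x`
give `cosh ‖v + u‖ + cosh ‖v - u‖ ≤ 2 cosh ‖v‖ cosh ‖u‖`. By Jensen's inequality, replacing
`μ_P` by an independent copy `φ ξ'` and symmetrising in `(ξ, ξ')`, adding one centred sample
`φ ξ - μ_P` to a fixed vector `v` multiplies `E cosh ‖v + ·‖` by at most `cosh (2√C)`.
Iterating over the samples gives `E cosh (λ ‖∑ⱼ (φ ξⱼ - μ_P)‖) ≤ cosh (2λ√C) ^ n ≤ exp (2nλ²C)`,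
and Markov's inequality with `λ = t / (4C)` yields the tail bound.
-/

open MeasureTheory

open Real Set

theorem convexOn_cosh : ConvexOn ℝ univ cosh :=
  ((convexOn_exp.add (convexOn_exp.comp_linearMap (-LinearMap.id))).smul
    (by norm_num : (0 : ℝ) ≤ 1 / 2)).congr fun x _ => by
    simp only [LinearMap.coe_neg, LinearMap.id_coe, Pi.add_apply, Function.comp_apply,
      Pi.neg_apply, id_eq, smul_eq_mul, cosh_eq]
    ring

theorem convexOn_cosh_norm {E : Type*} [SeminormedAddCommGroup E] [NormedSpace ℝ E] :
    ConvexOn ℝ univ fun w : E => cosh ‖w‖ := by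
  refine ⟨convex_univ, fun x _ y _ a b ha hb hab => ?_⟩
  have hnorm : ‖a • x + b • y‖ ≤ a * ‖x‖ + b * ‖y‖ :=
    convexOn_univ_norm.2 trivial trivial ha hb hab
  calc cosh ‖a • x + b • y‖ ≤ cosh (a * ‖x‖ + b * ‖y‖) := by
        rw [cosh_le_cosh, abs_norm, abs_of_nonneg (hnorm.trans' (norm_nonneg _))]
        exact hnorm
    _ ≤ a • cosh ‖x‖ + b • cosh ‖y‖ := convexOn_cosh.2 trivial trivial ha hb hab

theorem summable_pow_div_factorial_two_mul (x : ℝ) :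
    Summable fun k : ℕ => x ^ k / (2 * k).factorial := by
  refine .of_norm_bounded (summable_pow_div_factorial |x|) fun k => ?_
  rw [norm_div, norm_pow, norm_natCast, norm_eq_abs]
  gcongr
  omega

theorem cosh_sqrt_eq_tsum {x : ℝ} (hx : 0 ≤ x) :
    cosh √x = ∑' k : ℕ, x ^ k / (2 * k).factorial := by
  simp_rw [cosh_eq_tsum, pow_mul, sq_sqrt hx]

theorem convexOn_cosh_sqrt : ConvexOn ℝ (Ici 0) fun x => cosh √x := by
  refine ⟨convex_Ici 0, fun x hx y hy a b ha hb hab => ?_⟩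
  have hsum := summable_pow_div_factorial_two_mul
  have hterm (k : ℕ) : (a • x + b • y) ^ k / (2 * k).factorial ≤
      a * (x ^ k / (2 * k).factorial) + b * (y ^ k / (2 * k).factorial) := by
    rw [mul_div_assoc', mul_div_assoc', ← add_div]
    gcongr
    exact (convexOn_pow k).2 hx hy ha hb hab
  simp only [smul_eq_mul] at hterm ⊢
  rw [cosh_sqrt_eq_tsum hx, cosh_sqrt_eq_tsum hy,
    cosh_sqrt_eq_tsum (add_nonneg (mul_nonneg ha hx) (mul_nonneg hb hy)), ← tsum_mul_left,
    ← tsum_mul_left, ← ((hsum x).mul_left a).tsum_add ((hsum y).mul_left b)]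
  exact (hsum _).tsum_le_tsum hterm (((hsum x).mul_left a).add ((hsum y).mul_left b))

theorem ConvexOn.add_le_add_of_mem_segment {E : Type*} [AddCommGroup E] [Module ℝ E]
    {s : Set E} {f : E → ℝ} (hf : ConvexOn ℝ s f) {p q x y : E} (hp : p ∈ s) (hq : q ∈ s)
    (hx : x ∈ segment ℝ p q) (hxy : x + y = p + q) : f x + f y ≤ f p + f q := by
  obtain ⟨a, b, ha, hb, hab, rfl⟩ := hx
  obtain rfl : y = b • p + a • q := by
    linear_combination (norm := module) hxy - hab • (p + q)
  have h₁ := hf.2 hp hq ha hb hab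
  have h₂ := hf.2 hp hq hb ha (by rw [add_comm, hab])
  simp only [smul_eq_mul] at h₁ h₂
  linear_combination h₁ + h₂ + (f p + f q) * hab

theorem cosh_norm_add_add_cosh_norm_sub_le {H : Type*} [NormedAddCommGroup H]
    [InnerProductSpace ℝ H] (v u : H) :
    cosh ‖v + u‖ + cosh ‖v - u‖ ≤ 2 * (cosh ‖v‖ * cosh ‖u‖) := by
  have hcosh (r : ℝ) : cosh r = cosh √(r ^ 2) := by rw [sqrt_sq_eq_abs, cosh_abs]
  have hadd : ‖v + u‖ ^ 2 ≤ (‖v‖ + ‖u‖) ^ 2 := by gcongr; exact norm_add_le v u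
  have hsub : ‖v - u‖ ^ 2 ≤ (‖v‖ + ‖u‖) ^ 2 := by gcongr; exact norm_sub_le v u
  have hsum : ‖v + u‖ ^ 2 + ‖v - u‖ ^ 2 = (‖v‖ - ‖u‖) ^ 2 + (‖v‖ + ‖u‖) ^ 2 := by
    linear_combination parallelogram_law_with_norm ℝ v u
  have hseg : ‖v + u‖ ^ 2 ∈ segment ℝ ((‖v‖ - ‖u‖) ^ 2) ((‖v‖ + ‖u‖) ^ 2) := by
    rw [segment_eq_Icc (by nlinarith [norm_nonneg v, norm_nonneg u])]
    constructor <;> linarith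
  calc cosh ‖v + u‖ + cosh ‖v - u‖
      = cosh √(‖v + u‖ ^ 2) + cosh √(‖v - u‖ ^ 2) := by rw [← hcosh, ← hcosh]
    _ ≤ cosh √((‖v‖ - ‖u‖) ^ 2) + cosh √((‖v‖ + ‖u‖) ^ 2) :=
      convexOn_cosh_sqrt.add_le_add_of_mem_segment (mem_Ici.2 (sq_nonneg _))
        (mem_Ici.2 (sq_nonneg _)) hseg hsum
    _ = cosh (‖v‖ - ‖u‖) + cosh (‖v‖ + ‖u‖) := by rw [← hcosh, ← hcosh]
    _ = 2 * (cosh ‖v‖ * cosh ‖u‖) := by rw [cosh_add, cosh_sub]; ring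

theorem integrable_cosh_norm_of_norm_le {α E : Type*} [MeasurableSpace α] {μ : Measure α}
    [IsFiniteMeasure μ] [SeminormedAddCommGroup E] {f : α → E} (hf : AEStronglyMeasurable f μ)
    {B : ℝ} (hB : ∀ x, ‖f x‖ ≤ B) : Integrable (fun x => cosh ‖f x‖) μ := by
  refine .of_bound (continuous_cosh.comp_aestronglyMeasurable hf.norm) (cosh B)
    (ae_of_all _ fun x => ?_)
  rw [norm_of_nonneg (cosh_pos _).le, cosh_le_cosh, abs_norm]
  exact (hB x).trans (le_abs_self B)

section

variable {Ξ : Type*} [MeasurableSpace Ξ] {P : Measure Ξ} [IsProbabilityMeasure P]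

theorem integral_prod_cosh_norm_add_sub_le {H : Type*} [NormedAddCommGroup H]
    [InnerProductSpace ℝ H] {φ : Ξ → H} (hφm : StronglyMeasurable φ) {R : ℝ}
    (hφ : ∀ ξ, ‖φ ξ‖ ≤ R) (v : H) :
    ∫ z, cosh ‖v + (φ z.1 - φ z.2)‖ ∂(P.prod P) ≤ cosh ‖v‖ * cosh (2 * R) := by
  set F : Ξ × Ξ → ℝ := fun z => cosh ‖v + (φ z.1 - φ z.2)‖
  have hdiff (z : Ξ × Ξ) : ‖φ z.1 - φ z.2‖ ≤ 2 * R :=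
    two_mul R ▸ norm_sub_le_of_le (hφ z.1) (hφ z.2)
  have hF : Integrable F (P.prod P) :=
    integrable_cosh_norm_of_norm_le (by fun_prop) fun z =>
      (norm_add_le _ _).trans (add_le_add_right (hdiff z) ‖v‖)
  have hsymm (z : Ξ × Ξ) : F z + F z.swap ≤ 2 * (cosh ‖v‖ * cosh (2 * R)) := by
    have hswap : F z.swap = cosh ‖v - (φ z.1 - φ z.2)‖ := by
      simp only [F, Prod.fst_swap, Prod.snd_swap, ← neg_sub (φ z.1), ← sub_eq_add_neg]
    rw [hswap]
    refine (cosh_norm_add_add_cosh_norm_sub_le _ _).trans ?_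
    gcongr
    rw [cosh_le_cosh, abs_norm]
    exact (hdiff z).trans (le_abs_self _)
  have hadd : ∫ z, (F z + F z.swap) ∂(P.prod P) =
      ∫ z, F z ∂(P.prod P) + ∫ z, F z.swap ∂(P.prod P) := integral_add hF hF.swap
  have hdouble : 2 * ∫ z, F z ∂(P.prod P) ≤ 2 * (cosh ‖v‖ * cosh (2 * R)) :=
    calc 2 * ∫ z, F z ∂(P.prod P) = ∫ z, (F z + F z.swap) ∂(P.prod P) := by
          rw [hadd, integral_prod_swap F]
          ring
      _ ≤ ∫ _, 2 * (cosh ‖v‖ * cosh (2 * R)) ∂(P.prod P) :=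
          integral_mono (hF.add hF.swap) (integrable_const _) hsymm
      _ = 2 * (cosh ‖v‖ * cosh (2 * R)) := by simp
  linarith

theorem integral_cosh_norm_add_sub_integral_le {H : Type*} [NormedAddCommGroup H]
    [InnerProductSpace ℝ H] [CompleteSpace H] {φ : Ξ → H} (hφm : StronglyMeasurable φ) {R : ℝ}
    (hφ : ∀ ξ, ‖φ ξ‖ ≤ R) (v : H) :
    ∫ ξ, cosh ‖v + (φ ξ - ∫ ξ', φ ξ' ∂P)‖ ∂P ≤ cosh ‖v‖ * cosh (2 * R) := by
  have hφi : Integrable φ P := .of_bound hφm.aestronglyMeasurable R (ae_of_all _ hφ)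
  have hbound (ξ ξ' : Ξ) : ‖v + (φ ξ - φ ξ')‖ ≤ ‖v‖ + (R + R) :=
    (norm_add_le _ _).trans (add_le_add_right (norm_sub_le_of_le (hφ ξ) (hφ ξ')) _)
  have hF : Integrable (fun z : Ξ × Ξ => cosh ‖v + (φ z.1 - φ z.2)‖) (P.prod P) :=
    integrable_cosh_norm_of_norm_le (by fun_prop) fun z => hbound z.1 z.2
  have hjensen (ξ : Ξ) :
      cosh ‖v + (φ ξ - ∫ ξ', φ ξ' ∂P)‖ ≤ ∫ ξ', cosh ‖v + (φ ξ - φ ξ')‖ ∂P := by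
    have hsub : Integrable (fun ξ' => φ ξ - φ ξ') P := (integrable_const _).sub hφi
    have hmean : ∫ ξ', v + (φ ξ - φ ξ') ∂P = v + (φ ξ - ∫ ξ', φ ξ' ∂P) := by
      rw [integral_add (integrable_const _) hsub, integral_sub (integrable_const _) hφi]
      simp
    rw [← hmean]
    exact convexOn_cosh_norm.map_integral_le (g := fun w : H => cosh ‖w‖)
      (continuous_cosh.comp continuous_norm).continuousOn
      isClosed_univ (ae_of_all _ fun _ => mem_univ _) ((integrable_const _).add hsub)
      (integrable_cosh_norm_of_norm_le (by fun_prop) (hbound ξ))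
  have hcentred : Integrable (fun ξ => cosh ‖v + (φ ξ - ∫ ξ', φ ξ' ∂P)‖) P :=
    integrable_cosh_norm_of_norm_le (by fun_prop) (B := ‖v‖ + (R + ‖∫ ξ', φ ξ' ∂P‖)) fun ξ =>
      (norm_add_le _ _).trans (add_le_add_right (norm_sub_le_of_le (hφ ξ) le_rfl) _)
  calc ∫ ξ, cosh ‖v + (φ ξ - ∫ ξ', φ ξ' ∂P)‖ ∂P
      ≤ ∫ ξ, ∫ ξ', cosh ‖v + (φ ξ - φ ξ')‖ ∂P ∂P :=
        integral_mono hcentred hF.integral_prod_left hjensen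
    _ = ∫ z, cosh ‖v + (φ z.1 - φ z.2)‖ ∂(P.prod P) := (integral_prod _ hF).symm
    _ ≤ cosh ‖v‖ * cosh (2 * R) := integral_prod_cosh_norm_add_sub_le hφm hφ v

theorem integral_cosh_norm_add_sum_le {E : Type*} [SeminormedAddCommGroup E] {ψ : Ξ → E}
    (hψm : StronglyMeasurable ψ) {B : ℝ} (hψ : ∀ ξ, ‖ψ ξ‖ ≤ B) {K : ℝ}
    (hstep : ∀ v, ∫ ξ, cosh ‖v + ψ ξ‖ ∂P ≤ cosh ‖v‖ * K) (m : ℕ) (v : E) :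
    ∫ x, cosh ‖v + ∑ j, ψ (x j)‖ ∂(Measure.pi fun _ : Fin m => P) ≤ cosh ‖v‖ * K ^ m := by
  induction m generalizing v with
  | zero => simp
  | succ m ih =>
    have hK : 0 ≤ K := by
      simpa using (integral_nonneg fun _ => (cosh_pos _).le).trans (hstep 0)
    have hbound (ξ : Ξ) (y : Fin m → Ξ) : ‖v + ψ ξ + ∑ j, ψ (y j)‖ ≤ ‖v‖ + B + m * B := by
      refine (norm_add₃_le).trans ?_
      gcongr
      · exact hψ ξ
      · simpa using norm_sum_le_of_le Finset.univ fun j _ => hψ (y j)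
    have hint : Integrable (fun z : Ξ × (Fin m → Ξ) => cosh ‖v + ψ z.1 + ∑ j, ψ (z.2 j)‖)
        (P.prod (Measure.pi fun _ : Fin m => P)) :=
      integrable_cosh_norm_of_norm_le (by fun_prop) fun z => hbound z.1 z.2
    calc ∫ x, cosh ‖v + ∑ j, ψ (x j)‖ ∂(Measure.pi fun _ : Fin (m + 1) => P)
        = ∫ z : Ξ × (Fin m → Ξ), cosh ‖v + ψ z.1 + ∑ j, ψ (z.2 j)‖
            ∂(P.prod (Measure.pi fun _ : Fin m => P)) := by
          rw [← (measurePreserving_piFinSuccAbove (fun _ : Fin (m + 1) => P) 0).symm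
            |>.integral_comp']
          simp only [MeasurableEquiv.piFinSuccAbove_symm_apply, Fin.insertNthEquiv,
            Fin.sum_univ_succ, Fin.insertNth_zero, Equiv.coe_fn_mk, Fin.cons_succ,
            Fin.cons_zero, Fin.zero_succAbove, cast_eq, add_assoc]
      _ = ∫ ξ, ∫ y, cosh ‖v + ψ ξ + ∑ j, ψ (y j)‖ ∂(Measure.pi fun _ : Fin m => P) ∂P :=
          integral_prod _ hint
      _ ≤ ∫ ξ, cosh ‖v + ψ ξ‖ * K ^ m ∂P :=
          integral_mono hint.integral_prod_left
            ((integrable_cosh_norm_of_norm_le (by fun_prop) (B := ‖v‖ + B)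
              fun ξ => (norm_add_le _ _).trans (by gcongr; exact hψ ξ)).mul_const _)
            fun ξ => ih (v + ψ ξ)
      _ = (∫ ξ, cosh ‖v + ψ ξ‖ ∂P) * K ^ m := integral_mul_const _ _
      _ ≤ cosh ‖v‖ * K ^ (m + 1) := by
          rw [pow_succ', ← mul_assoc]
          gcongr
          exact hstep v

theorem integral_cosh_norm_smul_sum_sub_integral_le {H : Type*} [NormedAddCommGroup H]
    [InnerProductSpace ℝ H] [CompleteSpace H] {φ : Ξ → H} (hφm : StronglyMeasurable φ) {R : ℝ}
    (hφ : ∀ ξ, ‖φ ξ‖ ≤ R) (m : ℕ) (l : ℝ) :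
    ∫ x, cosh ‖l • ∑ j, (φ (x j) - ∫ ξ, φ ξ ∂P)‖ ∂(Measure.pi fun _ : Fin m => P) ≤
      cosh (2 * (|l| * R)) ^ m := by
  have hlφ (ξ : Ξ) : ‖l • φ ξ‖ ≤ |l| * R := by
    rw [norm_smul, norm_eq_abs]
    gcongr
    exact hφ ξ
  simpa [integral_smul, ← smul_sub, ← Finset.smul_sum] using
    integral_cosh_norm_add_sum_le (ψ := fun ξ => l • φ ξ - ∫ ξ', l • φ ξ' ∂P) (by fun_prop)
      (fun ξ => norm_sub_le_of_le (hlφ ξ) le_rfl)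
      (integral_cosh_norm_add_sub_integral_le (hφm.const_smul l) hlφ) m 0

theorem measureReal_le_norm_sum_sub_integral_le {H : Type*} [NormedAddCommGroup H]
    [InnerProductSpace ℝ H] [CompleteSpace H] {φ : Ξ → H} (hφm : StronglyMeasurable φ) {R : ℝ}
    (hφ : ∀ ξ, ‖φ ξ‖ ≤ R) (m : ℕ) {s : ℝ} (hs : 0 ≤ s) (l : ℝ) :
    (Measure.pi fun _ : Fin m => P).real {x | s ≤ ‖∑ j, (φ (x j) - ∫ ξ, φ ξ ∂P)‖} ≤
      2 * exp (2 * m * l ^ 2 * R ^ 2 - l * s) := by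
  set S : (Fin m → Ξ) → H := fun x => ∑ j, (φ (x j) - ∫ ξ, φ ξ ∂P)
  have hint : Integrable (fun x => cosh ‖l • S x‖) (Measure.pi fun _ : Fin m => P) :=
    integrable_cosh_norm_of_norm_le (by fun_prop) (B := |l| * (m * (R + ‖∫ ξ, φ ξ ∂P‖)))
      fun x => by
        rw [norm_smul, norm_eq_abs]
        gcongr
        refine (norm_sum_le_of_le Finset.univ fun j _ =>
          norm_sub_le_of_le (hφ (x j)) le_rfl).trans_eq ?_
        simp [mul_add]
  have hmarkov := mul_meas_ge_le_integral_of_nonneg (ae_of_all _ fun x => (cosh_pos _).le) hint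
    (cosh (l * s))
  have hsub : {x | s ≤ ‖S x‖} ⊆ {x | cosh (l * s) ≤ cosh ‖l • S x‖} := fun x hx => by
    rw [mem_ofPred_eq, cosh_le_cosh, abs_norm, norm_smul, abs_mul, abs_of_nonneg hs, norm_eq_abs]
    gcongr
    exact hx
  have hcosh : exp (l * s) / 2 ≤ cosh (l * s) := by
    rw [cosh_eq]
    linarith [exp_pos (-(l * s))]
  have hcosh_pow : cosh (2 * (|l| * R)) ^ m ≤ exp (2 * m * l ^ 2 * R ^ 2) :=
    calc cosh (2 * (|l| * R)) ^ m ≤ exp ((2 * (|l| * R)) ^ 2 / 2) ^ m := by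
          gcongr
          exact cosh_le_exp_half_sq _
      _ = exp (2 * m * l ^ 2 * R ^ 2) := by
          rw [← exp_nat_mul, mul_pow, mul_pow, sq_abs]
          ring_nf
  calc (Measure.pi fun _ : Fin m => P).real {x | s ≤ ‖S x‖}
      ≤ (Measure.pi fun _ : Fin m => P).real {x | cosh (l * s) ≤ cosh ‖l • S x‖} :=
        measureReal_mono hsub
    _ ≤ (∫ x, cosh ‖l • S x‖ ∂(Measure.pi fun _ : Fin m => P)) / cosh (l * s) := by
        rw [le_div_iff₀ (cosh_pos _), mul_comm]
        exact hmarkov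
    _ ≤ exp (2 * m * l ^ 2 * R ^ 2) / (exp (l * s) / 2) := by
        gcongr
        exact (integral_cosh_norm_smul_sum_sub_integral_le hφm hφ m l).trans hcosh_pow
    _ = 2 * exp (2 * m * l ^ 2 * R ^ 2 - l * s) := by
        rw [exp_sub]
        field_simp

end

theorem empEmb_sub_eq_inv_smul_sum_sub {Ξ H : Type*} [NormedAddCommGroup H]
    [InnerProductSpace ℝ H] (φ : Ξ → H) {n : ℕ} (hn : n ≠ 0) (x : Fin n → Ξ) (μ : H) :
    empEmb φ x - μ = (n : ℝ)⁻¹ • ∑ j, (φ (x j) - μ) := by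
  rw [empEmb, Finset.sum_sub_distrib, smul_sub, Finset.sum_const, Finset.card_univ,
    Fintype.card_fin, ← Nat.cast_smul_eq_nsmul ℝ, smul_smul,
    inv_mul_cancel₀ (Nat.cast_ne_zero.2 hn), one_smul]

/-- **Sub-Gaussian tail bound for the empirical mean embedding.**
For every `t ≥ 0`, `P(‖μ̂ − μ_P‖ ≥ t) ≤ 2·exp(−n t² / (8C))`, the probability being
over the `n` i.i.d. samples from `P` (modeled by the product measure on `Fin n → Ξ`). -/
theorem tail_bound_for_empirical_mean_embedding
    {H : Type*} [NormedAddCommGroup H] [InnerProductSpace ℝ H] [CompleteSpace H]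
    {Ξ : Type*} [MeasurableSpace Ξ]
    (C : ℝ) (hC : 0 < C)
    (φ : Ξ → H) (hφm : StronglyMeasurable φ) (hφ : ∀ ξ, ‖φ ξ‖ ^ 2 ≤ C)
    (P : Measure Ξ) [IsProbabilityMeasure P]
    (n : ℕ) (hn : 0 < n)
    (t : ℝ) (ht : 0 ≤ t) :
    (Measure.pi fun _ : Fin n => P) {x : Fin n → Ξ | t ≤ ‖empEmb φ x - ∫ ξ, φ ξ ∂P‖} ≤
      ENNReal.ofReal (2 * Real.exp (-(n * t ^ 2 / (8 * C)))) := by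
  have hφ' (ξ : Ξ) : ‖φ ξ‖ ≤ √C := abs_norm (φ ξ) ▸ abs_le_sqrt (hφ ξ)
  have hn' : (0 : ℝ) < n := Nat.cast_pos.2 hn
  have hset : {x : Fin n → Ξ | t ≤ ‖empEmb φ x - ∫ ξ, φ ξ ∂P‖} =
      {x | n * t ≤ ‖∑ j, (φ (x j) - ∫ ξ, φ ξ ∂P)‖} := by
    ext x
    rw [mem_ofPred_eq, mem_ofPred_eq, empEmb_sub_eq_inv_smul_sum_sub φ hn.ne', norm_smul,
      norm_inv, RCLike.norm_natCast, le_inv_mul_iff₀ hn']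
  rw [← ofReal_measureReal, hset]
  refine ENNReal.ofReal_le_ofReal ((measureReal_le_norm_sum_sub_integral_le hφm hφ' n
    (mul_nonneg hn'.le ht) (t / (4 * C))).trans_eq ?_)
  rw [sq_sqrt hC.le]
  congr 2
  field_simp
  ring
end

section
/- For every δ ∈ (0,1), with probability at least 1 − δ over the M mutually independent datasets, the aggregated embedding estimation error satisfies Σ_{i=1}^M ‖μ̂_i − μ_i‖_H² ≤ 2C(1 + 2·log(M/δ))/n̄. -/
open MeasureTheory

open ProbabilityTheory Real
open scoped NNReal ENNReal

/-!
Fix one dataset of size `n` and put `f x = ‖μ̂(x) - μ_P‖`. Replacing one sample moves `μ̂` by at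
most `2√C / n`, so by McDiarmid's inequality `f - E f` is sub-Gaussian with variance proxy `C / n`
and exceeds `ε = √(2CL/n)` with probability at most `exp (-L)`. The centred samples
`φ(ξ_j) - μ_P` are independent with mean zero, hence orthogonal in `L²`, which gives
`(E f)² ≤ E f² ≤ C / n`. Since `(a + b)² ≤ 2a² + 2b²`, outside that event
`‖μ̂ - μ_P‖² ≤ 2C(1 + 2L)/n`. Taking `L = log (M/δ)`, a union bound over the `M` datasets and
`∑ 1/n_i = 1/n̄` give the claim.

McDiarmid's inequality itself follows by induction on `n`: conditionally on the last `n`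
coordinates, Hoeffding's lemma controls the first one, and the conditional mean inherits the
bounded differences.
-/

theorem exists_forall_mem_Icc_of_sub_le {α : Type*} [Nonempty α] {X : α → ℝ} {c : ℝ}
    (h : ∀ a b, X a - X b ≤ c) : ∃ a, ∀ ξ, X ξ ∈ Set.Icc a (a + c) := by
  have hbdd : BddBelow (Set.range X) :=
    ⟨X (Classical.arbitrary α) - c, by rintro _ ⟨b, rfl⟩; linarith [h (Classical.arbitrary α) b]⟩
  refine ⟨⨅ b, X b, fun a => ⟨ciInf_le hbdd a, ?_⟩⟩
  have : X a - c ≤ ⨅ b, X b := le_ciInf fun b => by linarith [h a b]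
  linarith

section Probability

variable {Ω : Type*} [MeasurableSpace Ω]

theorem mgf_sub_integral_le_of_sub_le (μ : Measure Ω) [IsProbabilityMeasure μ] {X : Ω → ℝ}
    (hX : Measurable X) {c : ℝ} (h : ∀ a b, X a - X b ≤ c) (t : ℝ) :
    mgf (fun ω => X ω - ∫ x, X x ∂μ) μ t ≤ exp (c ^ 2 * t ^ 2 / 8) := by
  have := nonempty_of_isProbabilityMeasure μ
  obtain ⟨a, ha⟩ := exists_forall_mem_Icc_of_sub_le h
  refine ((hasSubgaussianMGF_of_mem_Icc hX.aemeasurable (ae_of_all μ ha)).mgf_le t).trans_eq ?_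
  push_cast
  rw [add_sub_cancel_left, Real.norm_eq_abs, div_pow, sq_abs]
  ring_nf

theorem integrable_exp_mul_sub_of_abs_le {μ : Measure Ω} [IsFiniteMeasure μ] {X : Ω → ℝ}
    (hX : Measurable X) {B : ℝ} (hXB : ∀ ω, |X ω| ≤ B) (m t : ℝ) :
    Integrable (fun ω => exp (t * (X ω - m))) μ :=
  integrable_exp_mul_of_mem_Icc (a := -B - m) (b := B - m) (hX.sub_const m).aemeasurable
    (ae_of_all _ fun ω => by
      obtain ⟨h₁, h₂⟩ := abs_le.1 (hXB ω)
      constructor <;> linarith)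

theorem integrable_norm_sq_of_norm_le {E : Type*} [NormedAddCommGroup E] {μ : Measure Ω}
    [IsFiniteMeasure μ] {g : Ω → E} (hg : AEStronglyMeasurable g μ) {B : ℝ}
    (hgB : ∀ ω, ‖g ω‖ ≤ B) : Integrable (fun ω => ‖g ω‖ ^ 2) μ :=
  (MemLp.of_bound (p := ((2 : ℕ) : ℝ≥0∞)) hg B (ae_of_all _ hgB)).integrable_norm_pow two_ne_zero

theorem sq_integral_le_integral_sq {μ : Measure Ω} [IsProbabilityMeasure μ] {X : Ω → ℝ}
    (hX : MemLp X 2 μ) : (∫ ω, X ω ∂μ) ^ 2 ≤ ∫ ω, X ω ^ 2 ∂μ := by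
  have := variance_nonneg X μ
  rw [variance_eq_sub hX] at this
  simpa using this

theorem ProbabilityTheory.HasSubgaussianMGF.measure_lt_sq_le {μ : Measure Ω}
    [IsProbabilityMeasure μ] {f : Ω → ℝ} {σ : ℝ≥0}
    (hf : HasSubgaussianMGF (fun x => f x - ∫ y, f y ∂μ) σ μ) (hσ : 0 < σ)
    (hf0 : ∀ x, 0 ≤ f x) {a : ℝ} (ha : (∫ x, f x ∂μ) ^ 2 ≤ a) {L : ℝ} (hL : 0 ≤ L) :
    μ {x | 2 * a + 4 * σ * L < f x ^ 2} ≤ ENNReal.ofReal (exp (-L)) := by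
  set m := ∫ x, f x ∂μ
  have hm0 : 0 ≤ m := integral_nonneg hf0
  set ε := √(2 * σ * L)
  have hε2 : ε ^ 2 = 2 * σ * L := Real.sq_sqrt (by positivity)
  have hsub : {x | 2 * a + 4 * σ * L < f x ^ 2} ⊆ {x | ε ≤ f x - m} := by
    intro x hx
    by_contra hlt
    simp only [Set.mem_ofPred_eq, not_le] at hx hlt
    have : f x ^ 2 < (m + ε) ^ 2 := pow_lt_pow_left₀ (by linarith) (hf0 x) two_ne_zero
    nlinarith [sq_nonneg (m - ε)]
  have hexp : -ε ^ 2 / (2 * σ) = -L := by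
    rw [hε2]
    field_simp
  calc μ {x | 2 * a + 4 * σ * L < f x ^ 2} ≤ μ {x | ε ≤ f x - m} := measure_mono hsub
    _ = ENNReal.ofReal (μ.real {x | ε ≤ f x - m}) := (ofReal_measureReal).symm
    _ ≤ ENNReal.ofReal (exp (-L)) :=
        ENNReal.ofReal_le_ofReal ((hf.measure_ge_le (sqrt_nonneg _)).trans_eq (by rw [hexp]))

end Probability

theorem MeasureTheory.Measure.pi_eval_preimage {ι : Type*} [Fintype ι] {α : ι → Type*}
    [∀ i, MeasurableSpace (α i)] (ν : ∀ i, Measure (α i)) [∀ i, IsProbabilityMeasure (ν i)]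
    (i : ι) (T : Set (α i)) : Measure.pi ν (Function.eval i ⁻¹' T) = ν i T := by
  classical
  rw [← Set.univ_pi_update_univ, Measure.pi_pi,
    Finset.prod_eq_single i (fun j _ hj => by simp [hj]) (by simp), Function.update_self]

theorem MeasureTheory.Measure.one_sub_sum_measure_compl_le_pi {ι : Type*} [Fintype ι]
    {α : ι → Type*} [∀ i, MeasurableSpace (α i)] (ν : ∀ i, Measure (α i))
    [∀ i, IsProbabilityMeasure (ν i)] (S : ∀ i, Set (α i)) :
    1 - ∑ i, ν i (S i)ᶜ ≤ Measure.pi ν (Set.univ.pi S) := by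
  have hunion : Measure.pi ν (Set.univ.pi S)ᶜ ≤ ∑ i, ν i (S i)ᶜ := by
    have hcompl : (Set.univ.pi S)ᶜ = ⋃ i, Function.eval i ⁻¹' (S i)ᶜ := by ext x; simp
    rw [hcompl]
    exact (measure_iUnion_fintype_le _ _).trans_eq
      (Finset.sum_congr rfl fun i _ => Measure.pi_eval_preimage ν i _)
  calc 1 - ∑ i, ν i (S i)ᶜ ≤ 1 - Measure.pi ν (Set.univ.pi S)ᶜ := tsub_le_tsub_left hunion 1
    _ ≤ Measure.pi ν (Set.univ.pi S) := by
        rw [tsub_le_iff_right]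
        simpa using measure_univ_le_add_compl (μ := Measure.pi ν) (Set.univ.pi S)

section FinCons

variable {Ξ : Type*} [MeasurableSpace Ξ]

theorem measurable_fin_cons {n : ℕ} :
    Measurable fun z : Ξ × (Fin n → Ξ) => (Fin.cons z.1 z.2 : Fin (n + 1) → Ξ) := by
  refine measurable_pi_iff.2 fun j => Fin.cases ?_ (fun i => ?_) j
  · simpa using measurable_fst
  · simp only [Fin.cons_succ]
    fun_prop

theorem measurable_fin_cons_left {n : ℕ} (y : Fin n → Ξ) :
    Measurable fun ξ : Ξ => (Fin.cons ξ y : Fin (n + 1) → Ξ) :=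
  measurable_fin_cons.comp (measurable_id.prodMk measurable_const)

theorem integral_pi_fin_succ {E : Type*} [NormedAddCommGroup E] [NormedSpace ℝ E]
    (P : Measure Ξ) [SigmaFinite P] (n : ℕ) (F : (Fin (n + 1) → Ξ) → E) :
    ∫ x, F x ∂(Measure.pi fun _ => P) =
      ∫ z : Ξ × (Fin n → Ξ), F (Fin.cons z.1 z.2) ∂(P.prod (Measure.pi fun _ => P)) := by
  rw [← ((measurePreserving_piFinSuccAbove (fun _ => P) 0).symm).integral_comp']
  simp [MeasurableEquiv.piFinSuccAbove_symm_apply, Fin.insertNthEquiv]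

end FinCons

section BoundedDifferences

variable {Ξ : Type*}

def HasBoundedDifferences {ι : Type*} [DecidableEq ι] (f : (ι → Ξ) → ℝ) (c : ℝ) : Prop :=
  ∀ (j : ι) (x : ι → Ξ) (ξ ξ' : Ξ), f (Function.update x j ξ) - f (Function.update x j ξ') ≤ c

namespace HasBoundedDifferences

variable {n : ℕ} {f : (Fin (n + 1) → Ξ) → ℝ} {c : ℝ}

theorem comp_cons (hf : HasBoundedDifferences f c) (ξ : Ξ) :
    HasBoundedDifferences (fun y : Fin n → Ξ => f (Fin.cons ξ y)) c := by
  intro j y η η'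
  simpa only [Fin.cons_update] using hf j.succ (Fin.cons ξ y) η η'

theorem sub_le_of_cons (hf : HasBoundedDifferences f c) (y : Fin n → Ξ) (ξ ξ' : Ξ) :
    f (Fin.cons ξ y) - f (Fin.cons ξ' y) ≤ c := by
  simpa only [Fin.update_cons_zero] using hf 0 (Fin.cons ξ y) ξ ξ'

variable [MeasurableSpace Ξ]

theorem integral_cons (P : Measure Ξ) [IsProbabilityMeasure P] (hf : HasBoundedDifferences f c)
    (hfm : Measurable f) {B : ℝ} (hfB : ∀ x, |f x| ≤ B) :
    HasBoundedDifferences (fun y : Fin n → Ξ => ∫ ξ, f (Fin.cons ξ y) ∂P) c := by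
  have hint (y : Fin n → Ξ) : Integrable (fun ξ => f (Fin.cons ξ y)) P :=
    .of_bound (hfm.comp (measurable_fin_cons_left y)).aestronglyMeasurable B
      (ae_of_all _ fun ξ => hfB _)
  intro j y η η'
  rw [← integral_sub (hint _) (hint _)]
  calc _ ≤ ∫ _, c ∂P := integral_mono ((hint _).sub (hint _)) (integrable_const c)
        fun ξ => (hf.comp_cons ξ) j y η η'
    _ = c := by simp

theorem integral_exp_mul_cons_sub_le (P : Measure Ξ) [IsProbabilityMeasure P]
    (hf : HasBoundedDifferences f c) (hfm : Measurable f) (y : Fin n → Ξ) (m t : ℝ) :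
    ∫ ξ, exp (t * (f (Fin.cons ξ y) - m)) ∂P
      ≤ exp (c ^ 2 * t ^ 2 / 8) * exp (t * (∫ ξ, f (Fin.cons ξ y) ∂P - m)) := by
  set g := ∫ ξ, f (Fin.cons ξ y) ∂P
  calc ∫ ξ, exp (t * (f (Fin.cons ξ y) - m)) ∂P
      = exp (t * (g - m)) * mgf (fun ξ => f (Fin.cons ξ y) - g) P t := by
        rw [mgf, ← integral_const_mul]
        congr with ξ
        rw [← exp_add]
        ring_nf
    _ ≤ exp (t * (g - m)) * exp (c ^ 2 * t ^ 2 / 8) := by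
        gcongr
        exact mgf_sub_integral_le_of_sub_le P (hfm.comp (measurable_fin_cons_left y))
          (hf.sub_le_of_cons y) t
    _ = _ := mul_comm _ _

end HasBoundedDifferences

variable [MeasurableSpace Ξ]

theorem HasBoundedDifferences.integral_exp_mul_sub_integral_le (P : Measure Ξ)
    [IsProbabilityMeasure P] {n : ℕ} {f : (Fin n → Ξ) → ℝ} {c B : ℝ}
    (hf : HasBoundedDifferences f c) (hfm : Measurable f) (hfB : ∀ x, |f x| ≤ B) (t : ℝ) :
    ∫ x, exp (t * (f x - ∫ y, f y ∂(Measure.pi fun _ => P))) ∂(Measure.pi fun _ => P)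
      ≤ exp (n * c ^ 2 * t ^ 2 / 8) := by
  induction n with
  | zero =>
    have hconst : ∀ x : Fin 0 → Ξ, f x = f default := fun x => congrArg f (Subsingleton.elim _ _)
    simp [hconst _]
  | succ n ih =>
    set ν := Measure.pi fun _ : Fin n => P
    set m := ∫ y, f y ∂(Measure.pi fun _ => P) with hm_def
    set g : (Fin n → Ξ) → ℝ := fun y => ∫ ξ, f (Fin.cons ξ y) ∂P
    have hFm : Measurable fun z : Ξ × (Fin n → Ξ) => f (Fin.cons z.1 z.2) :=
      hfm.comp measurable_fin_cons
    have hgm : Measurable g := hFm.stronglyMeasurable.integral_prod_left'.measurable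
    have hgB (y : Fin n → Ξ) : |g y| ≤ B := by
      simpa using norm_integral_le_of_norm_le_const (μ := P)
        (ae_of_all _ fun ξ => (Real.norm_eq_abs _).trans_le (hfB (Fin.cons ξ y)))
    have hm : m = ∫ y, g y ∂ν := by
      rw [hm_def, integral_pi_fin_succ, integral_prod_symm _
        (.of_bound hFm.aestronglyMeasurable B (ae_of_all _ fun z => hfB _))]
    have hint := integrable_exp_mul_sub_of_abs_le (μ := P.prod ν) hFm (fun _ => hfB _) m t
    calc ∫ x, exp (t * (f x - m)) ∂(Measure.pi fun _ => P)
        = ∫ y, ∫ ξ, exp (t * (f (Fin.cons ξ y) - m)) ∂P ∂ν := by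
          rw [integral_pi_fin_succ, integral_prod_symm _ hint]
      _ ≤ ∫ y, exp (c ^ 2 * t ^ 2 / 8) * exp (t * (g y - m)) ∂ν :=
          integral_mono hint.integral_prod_right
            ((integrable_exp_mul_sub_of_abs_le hgm hgB m t).const_mul _)
            fun y => hf.integral_exp_mul_cons_sub_le P hfm y m t
      _ = exp (c ^ 2 * t ^ 2 / 8) * ∫ y, exp (t * (g y - ∫ y, g y ∂ν)) ∂ν := by
          rw [integral_const_mul, hm]
      _ ≤ exp (c ^ 2 * t ^ 2 / 8) * exp (n * c ^ 2 * t ^ 2 / 8) := by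
          gcongr
          exact ih (hf.integral_cons P hfm hfB) hgm hgB
      _ = exp ((n + 1 : ℕ) * c ^ 2 * t ^ 2 / 8) := by
          rw [← exp_add]
          push_cast
          ring_nf

theorem HasBoundedDifferences.hasSubgaussianMGF (P : Measure Ξ) [IsProbabilityMeasure P] {n : ℕ}
    {f : (Fin n → Ξ) → ℝ} {c : ℝ≥0} {B : ℝ} (hf : HasBoundedDifferences f c)
    (hfm : Measurable f) (hfB : ∀ x, |f x| ≤ B) :
    HasSubgaussianMGF (fun x => f x - ∫ y, f y ∂(Measure.pi fun _ => P)) (n * (c / 2) ^ 2)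
      (Measure.pi fun _ => P) where
  integrable_exp_mul t := integrable_exp_mul_sub_of_abs_le hfm hfB _ t
  mgf_le t := by
    refine (hf.integral_exp_mul_sub_integral_le P hfm hfB t).trans_eq ?_
    push_cast
    ring_nf

end BoundedDifferences

section KernelMeanEmbedding

variable {Ξ H : Type*} [NormedAddCommGroup H] [InnerProductSpace ℝ H]

theorem empEmb_sub_const {n : ℕ} (hn : n ≠ 0) (φ : Ξ → H) (v : H) (x : Fin n → Ξ) :
    empEmb (fun ξ => φ ξ - v) x = empEmb φ x - v := by
  simp [empEmb, Finset.sum_sub_distrib, smul_sub, ← Nat.cast_smul_eq_nsmul ℝ, smul_smul, hn]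

theorem norm_empEmb_le {n : ℕ} {φ : Ξ → H} {R : ℝ} (hφ : ∀ ξ, ‖φ ξ‖ ≤ R) (hR : 0 ≤ R)
    (x : Fin n → Ξ) : ‖empEmb φ x‖ ≤ R := by
  rcases n.eq_zero_or_pos with rfl | hn
  · simpa [empEmb] using hR
  rw [empEmb, norm_smul, norm_inv, Real.norm_natCast, inv_mul_le_iff₀ (by positivity)]
  exact (norm_sum_le _ _).trans
    (by simpa using Finset.sum_le_card_nsmul Finset.univ _ _ fun j _ => hφ (x j))

theorem empEmb_update_sub_empEmb_update {n : ℕ} (φ : Ξ → H) (x : Fin n → Ξ) (j : Fin n)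
    (ξ ξ' : Ξ) :
    empEmb φ (Function.update x j ξ) - empEmb φ (Function.update x j ξ')
      = (n : ℝ)⁻¹ • (φ ξ - φ ξ') := by
  simp only [empEmb, ← smul_sub, Function.apply_update (fun _ => φ),
    Finset.sum_update_of_mem (Finset.mem_univ j)]
  abel_nf

theorem hasBoundedDifferences_norm_empEmb_sub {n : ℕ} {φ : Ξ → H} {R : ℝ}
    (hφ : ∀ ξ, ‖φ ξ‖ ≤ R) (v : H) :
    HasBoundedDifferences (fun x : Fin n → Ξ => ‖empEmb φ x - v‖) (2 * R / n) := by
  intro j x ξ ξ'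
  calc ‖empEmb φ (Function.update x j ξ) - v‖ - ‖empEmb φ (Function.update x j ξ') - v‖
      ≤ ‖empEmb φ (Function.update x j ξ) - empEmb φ (Function.update x j ξ')‖ := by
        simpa using norm_sub_norm_le (empEmb φ (Function.update x j ξ) - v)
          (empEmb φ (Function.update x j ξ') - v)
    _ = (n : ℝ)⁻¹ * ‖φ ξ - φ ξ'‖ := by
        rw [empEmb_update_sub_empEmb_update, norm_smul, norm_inv, Real.norm_natCast]
    _ ≤ (n : ℝ)⁻¹ * (R + R) := by
        gcongr
        exact (norm_sub_le _ _).trans (add_le_add (hφ ξ) (hφ ξ'))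
    _ = 2 * R / n := by ring

variable [MeasurableSpace Ξ]

theorem stronglyMeasurable_empEmb {φ : Ξ → H} (hφ : StronglyMeasurable φ) (n : ℕ) :
    StronglyMeasurable fun x : Fin n → Ξ => empEmb φ x :=
  (Finset.stronglyMeasurable_fun_sum _ fun j _ =>
    hφ.comp_measurable (measurable_pi_apply j)).const_smul _

theorem norm_empEmb_sub_integral_le (P : Measure Ξ) [IsProbabilityMeasure P] {n : ℕ}
    {φ : Ξ → H} {R : ℝ} (hφ : ∀ ξ, ‖φ ξ‖ ≤ R) (x : Fin n → Ξ) :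
    ‖empEmb φ x - ∫ ξ, φ ξ ∂P‖ ≤ R + R := by
  have := nonempty_of_isProbabilityMeasure P
  refine (norm_sub_le _ _).trans (add_le_add
    (norm_empEmb_le hφ ((norm_nonneg _).trans (hφ (Classical.arbitrary Ξ))) x) ?_)
  simpa using norm_integral_le_of_norm_le_const (μ := P) (ae_of_all _ hφ)

theorem hasSubgaussianMGF_norm_empEmb_sub (P : Measure Ξ) [IsProbabilityMeasure P] {φ : Ξ → H}
    (hφm : StronglyMeasurable φ) {C : ℝ} (hφ : ∀ ξ, ‖φ ξ‖ ^ 2 ≤ C) {n : ℕ} (hn : 0 < n) :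
    HasSubgaussianMGF (fun x => ‖empEmb φ x - ∫ ξ, φ ξ ∂P‖ -
        ∫ y, ‖empEmb φ y - ∫ ξ, φ ξ ∂P‖ ∂(Measure.pi fun _ : Fin n => P))
      (C / n).toNNReal (Measure.pi fun _ : Fin n => P) := by
  have hR (ξ : Ξ) : ‖φ ξ‖ ≤ √C := by simpa using Real.abs_le_sqrt (hφ ξ)
  have hσ : (n * (⟨2 * √C / n, by positivity⟩ / 2) ^ 2 : ℝ≥0) = (C / n).toNNReal := by
    have := nonempty_of_isProbabilityMeasure P
    have hC : 0 ≤ C := (sq_nonneg _).trans (hφ (Classical.arbitrary Ξ))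
    have hn' : (n : ℝ) ≠ 0 := Nat.cast_ne_zero.2 hn.ne'
    rw [← NNReal.coe_inj, Real.coe_toNNReal _ (by positivity)]
    change (n : ℝ) * (2 * √C / n / 2) ^ 2 = C / n
    rw [show 2 * √C / n / 2 = √C / n by ring, div_pow, Real.sq_sqrt hC]
    field_simp
  rw [← hσ]
  exact (hasBoundedDifferences_norm_empEmb_sub hR _).hasSubgaussianMGF P
    ((stronglyMeasurable_empEmb hφm n).sub stronglyMeasurable_const).norm.measurable
    fun x => (abs_of_nonneg (norm_nonneg _)).trans_le (norm_empEmb_sub_integral_le P hR x)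

variable [CompleteSpace H]

theorem integral_norm_sum_sq_pi (P : Measure Ξ) [IsProbabilityMeasure P] {g : Ξ → H}
    (hg : StronglyMeasurable g) {B : ℝ} (hgB : ∀ ξ, ‖g ξ‖ ≤ B) (hg0 : ∫ ξ, g ξ ∂P = 0)
    (n : ℕ) :
    ∫ x, ‖∑ j, g (x j)‖ ^ 2 ∂(Measure.pi fun _ : Fin n => P) = n * ∫ ξ, ‖g ξ‖ ^ 2 ∂P := by
  induction n with
  | zero => simp
  | succ n ih =>
    set ν := Measure.pi fun _ : Fin n => P
    set S : (Fin n → Ξ) → H := fun y => ∑ j, g (y j)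
    have hSm : StronglyMeasurable S :=
      Finset.stronglyMeasurable_fun_sum _ fun j _ => hg.comp_measurable (measurable_pi_apply j)
    have hSB (y : Fin n → Ξ) : ‖S y‖ ≤ n * B := (norm_sum_le _ _).trans
      (by simpa using Finset.sum_le_card_nsmul Finset.univ _ _ fun j _ => hgB (y j))
    have hcross : Integrable (fun z : Ξ × (Fin n → Ξ) => inner ℝ (g z.1) (S z.2)) (P.prod ν) :=
      .of_bound ((hg.comp_measurable measurable_fst).inner
          (hSm.comp_measurable measurable_snd)).aestronglyMeasurable
        (B * (n * B)) (ae_of_all _ fun z => (norm_inner_le_norm _ _).trans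
          (mul_le_mul (hgB _) (hSB _) (norm_nonneg _) ((norm_nonneg _).trans (hgB z.1))))
    have hcross0 : ∫ z, inner ℝ (g z.1) (S z.2) ∂(P.prod ν) = 0 := by
      rw [integral_prod_symm _ hcross]
      simp_rw [real_inner_comm (S _),
        integral_inner (Integrable.of_bound hg.aestronglyMeasurable B (ae_of_all _ hgB)), hg0,
        inner_zero_right, integral_zero]
    have hg2 := integrable_norm_sq_of_norm_le (μ := P) hg.aestronglyMeasurable hgB
    have hS2 := integrable_norm_sq_of_norm_le (μ := ν) hSm.aestronglyMeasurable hSB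
    rw [integral_pi_fin_succ]
    simp only [Fin.sum_univ_succ, Fin.cons_zero, Fin.cons_succ, norm_add_sq_real]
    change ∫ z, ‖g z.1‖ ^ 2 + 2 * inner ℝ (g z.1) (S z.2) + ‖S z.2‖ ^ 2 ∂(P.prod ν) = _
    rw [integral_add ((hg2.comp_fst ν).fun_add (hcross.const_mul 2)) (hS2.comp_snd P),
      integral_add (hg2.comp_fst ν) (hcross.const_mul 2), integral_const_mul, hcross0,
      integral_fun_fst (fun ξ => ‖g ξ‖ ^ 2), integral_fun_snd (fun y => ‖S y‖ ^ 2), ih]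
    simp
    ring

theorem integral_norm_sub_integral_sq (P : Measure Ξ) [IsProbabilityMeasure P] {φ : Ξ → H}
    (hφ : MemLp φ 2 P) :
    ∫ ξ, ‖φ ξ - ∫ ξ', φ ξ' ∂P‖ ^ 2 ∂P = ∫ ξ, ‖φ ξ‖ ^ 2 ∂P - ‖∫ ξ, φ ξ ∂P‖ ^ 2 := by
  set μP := ∫ ξ, φ ξ ∂P
  have hφ1 : Integrable φ P := hφ.integrable one_le_two
  have hφ2 : Integrable (fun ξ => ‖φ ξ‖ ^ 2) P := hφ.integrable_norm_pow two_ne_zero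
  have hinner : ∫ ξ, inner ℝ (φ ξ) μP ∂P = ‖μP‖ ^ 2 := by
    rw [integral_congr_ae (ae_of_all _ fun ξ => real_inner_comm μP (φ ξ)), integral_inner hφ1,
      real_inner_self_eq_norm_sq]
  simp_rw [norm_sub_sq_real]
  rw [integral_add (f := fun ξ => ‖φ ξ‖ ^ 2 - 2 * inner ℝ (φ ξ) μP)
      (hφ2.sub ((hφ1.inner_const μP).const_mul 2)) (integrable_const _),
    integral_sub hφ2 ((hφ1.inner_const μP).const_mul 2), integral_const_mul, hinner]
  simp
  ring

theorem integral_norm_empEmb_sub_sq_le (P : Measure Ξ) [IsProbabilityMeasure P] {φ : Ξ → H}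
    (hφm : StronglyMeasurable φ) {C : ℝ} (hφ : ∀ ξ, ‖φ ξ‖ ^ 2 ≤ C) {n : ℕ} (hn : 0 < n) :
    ∫ x, ‖empEmb φ x - ∫ ξ, φ ξ ∂P‖ ^ 2 ∂(Measure.pi fun _ : Fin n => P) ≤ C / n := by
  set μP := ∫ ξ, φ ξ ∂P
  have hR (ξ : Ξ) : ‖φ ξ‖ ≤ √C := by simpa using Real.abs_le_sqrt (hφ ξ)
  have hμP : ‖μP‖ ≤ √C := by
    simpa using norm_integral_le_of_norm_le_const (μ := P) (ae_of_all _ hR)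
  have hφ2 : MemLp φ 2 P := .of_bound hφm.aestronglyMeasurable _ (ae_of_all _ hR)
  have hsum := integral_norm_sum_sq_pi P (g := fun ξ => φ ξ - μP)
    (hφm.sub stronglyMeasurable_const) (fun ξ => (norm_sub_le _ _).trans (add_le_add (hR ξ) hμP))
    (by rw [integral_sub (hφ2.integrable one_le_two) (integrable_const _)]; simp [μP]) n
  have hnorm (x : Fin n → Ξ) :
      ‖empEmb φ x - μP‖ ^ 2 = ((n : ℝ)⁻¹) ^ 2 * ‖∑ j, (φ (x j) - μP)‖ ^ 2 := by
    rw [← empEmb_sub_const hn.ne', empEmb, norm_smul, mul_pow, Real.norm_eq_abs, sq_abs]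
  simp_rw [hnorm]
  rw [integral_const_mul, hsum, integral_norm_sub_integral_sq P hφ2]
  have hmoment : ∫ ξ, ‖φ ξ‖ ^ 2 ∂P ≤ C := by
    simpa using integral_mono (hφ2.integrable_norm_pow two_ne_zero) (integrable_const C) hφ
  have hn' : (n : ℝ) ≠ 0 := Nat.cast_ne_zero.2 hn.ne'
  calc ((n : ℝ)⁻¹) ^ 2 * (n * (∫ ξ, ‖φ ξ‖ ^ 2 ∂P - ‖μP‖ ^ 2))
      = (∫ ξ, ‖φ ξ‖ ^ 2 ∂P - ‖μP‖ ^ 2) / n := by field_simp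
    _ ≤ C / n := by gcongr; nlinarith [sq_nonneg ‖μP‖]

theorem measure_lt_norm_empEmb_sub_sq_le (P : Measure Ξ) [IsProbabilityMeasure P] {φ : Ξ → H}
    (hφm : StronglyMeasurable φ) {C : ℝ} (hC : 0 < C) (hφ : ∀ ξ, ‖φ ξ‖ ^ 2 ≤ C) {n : ℕ}
    (hn : 0 < n) {L : ℝ} (hL : 0 ≤ L) :
    (Measure.pi fun _ : Fin n => P)
        {x | 2 * C * (1 + 2 * L) / n < ‖empEmb φ x - ∫ ξ, φ ξ ∂P‖ ^ 2}
      ≤ ENNReal.ofReal (exp (-L)) := by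
  set ν := Measure.pi fun _ : Fin n => P
  set f := fun x : Fin n → Ξ => ‖empEmb φ x - ∫ ξ, φ ξ ∂P‖
  have hsg : HasSubgaussianMGF (fun x => f x - ∫ y, f y ∂ν) (C / n).toNNReal ν :=
    hasSubgaussianMGF_norm_empEmb_sub P hφm hφ hn
  have hf2 : MemLp f 2 ν := by
    simpa only [Pi.add_def, sub_add_cancel, ENNReal.coe_ofNat] using
      (hsg.memLp 2).add (memLp_const (∫ y, f y ∂ν))
  have hσ : ((C / n).toNNReal : ℝ) = C / n := Real.coe_toNNReal _ (by positivity)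
  convert hsg.measure_lt_sq_le (Real.toNNReal_pos.2 (by positivity)) (fun _ => norm_nonneg _)
    ((sq_integral_le_integral_sq hf2).trans (integral_norm_empEmb_sub_sq_le P hφm hφ hn)) hL using 5
  rw [hσ]
  ring

end KernelMeanEmbedding

/-- **Aggregated embedding estimation error bound.**
For every `δ ∈ (0,1)`, with probability at least `1 − δ` over the `M` mutually
independent datasets (the `i`-th consisting of `n i` i.i.d. samples from `P i`,
modeled by the product measure), `Σ_{i=1}^M ‖μ̂_i − μ_i‖² ≤ 2C(1 + 2·log(M/δ))/n̄`. -/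
theorem aggregated_embedding_error_bound
    {H : Type*} [NormedAddCommGroup H] [InnerProductSpace ℝ H] [CompleteSpace H]
    {Ξ : Type*} [MeasurableSpace Ξ]
    (C : ℝ) (hC : 0 < C)
    (φ : Ξ → H) (hφm : StronglyMeasurable φ) (hφ : ∀ ξ, ‖φ ξ‖ ^ 2 ≤ C)
    (M : ℕ) (hM : 0 < M)
    (P : Fin M → Measure Ξ) [∀ i, IsProbabilityMeasure (P i)]
    (n : Fin M → ℕ) (hn : ∀ i, 0 < n i)
    (μ : Fin M → H) (hμ : ∀ i, μ i = ∫ ξ, φ ξ ∂(P i))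
    (nbar : ℝ) (hnbar : nbar = (∑ i, (1 : ℝ) / n i)⁻¹)
    (δ : ℝ) (hδ : δ ∈ Set.Ioo (0 : ℝ) 1) :
    ENNReal.ofReal (1 - δ) ≤
      Measure.pi (fun i => Measure.pi fun _ : Fin (n i) => P i)
        {x : (i : Fin M) → Fin (n i) → Ξ |
          ∑ i, ‖empEmb φ (x i) - μ i‖ ^ 2 ≤ 2 * C * (1 + 2 * Real.log (M / δ)) / nbar} := by
  have hδ0 : 0 < δ := hδ.1
  have hM1 : (1 : ℝ) ≤ M := Nat.one_le_cast.2 hM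
  set L := Real.log (M / δ)
  have hL : 0 ≤ L := Real.log_nonneg ((one_le_div hδ0).2 (by linarith [hδ.2]))
  have hexpL : exp (-L) = δ / M := by rw [exp_neg, exp_log (by positivity), inv_div]
  set S : (i : Fin M) → Set (Fin (n i) → Ξ) :=
    fun i => {y | ‖empEmb φ y - μ i‖ ^ 2 ≤ 2 * C * (1 + 2 * L) / n i}
  have hbad (i : Fin M) :
      (Measure.pi fun _ : Fin (n i) => P i) (S i)ᶜ ≤ ENNReal.ofReal (δ / M) := by
    simpa [S, hμ i, Set.compl_ofPred, hexpL] using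
      measure_lt_norm_empEmb_sub_sq_le (P i) hφm hC hφ (hn i) hL
  have hgood : Set.univ.pi S ⊆
      {x | ∑ i, ‖empEmb φ (x i) - μ i‖ ^ 2 ≤ 2 * C * (1 + 2 * L) / nbar} := fun x hx =>
    calc ∑ i, ‖empEmb φ (x i) - μ i‖ ^ 2 ≤ ∑ i, 2 * C * (1 + 2 * L) / n i :=
          Finset.sum_le_sum fun i _ => hx i (Set.mem_univ i)
      _ = 2 * C * (1 + 2 * L) / nbar := by
          simp only [hnbar, div_inv_eq_mul, Finset.mul_sum, mul_one_div]
  calc ENNReal.ofReal (1 - δ) = 1 - ∑ _i : Fin M, ENNReal.ofReal (δ / M) := by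
        rw [Finset.sum_const, Finset.card_univ, Fintype.card_fin, nsmul_eq_mul,
          ← ENNReal.ofReal_natCast, ← ENNReal.ofReal_mul (by positivity),
          mul_div_cancel₀ _ (by positivity), ENNReal.ofReal_sub _ hδ0.le, ENNReal.ofReal_one]
    _ ≤ 1 - ∑ i, (Measure.pi fun _ : Fin (n i) => P i) (S i)ᶜ :=
        tsub_le_tsub_left (Finset.sum_le_sum fun i _ => hbad i) 1
    _ ≤ Measure.pi (fun i => Measure.pi fun _ : Fin (n i) => P i) (Set.univ.pi S) :=
        Measure.one_sub_sum_measure_compl_le_pi _ S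
    _ ≤ _ := measure_mono hgood
end

section
/- Let μ_1,…,μ_M and μ̂_1,…,μ̂_M be vectors in a real Hilbert space H with ‖μ_i‖ ≤ √C for all i, and set ε := (Σ_{i=1}^M ‖μ̂_i − μ_i‖²)^{1/2}. Then the Gram matrices K := [⟨μ_i,μ_j⟩_H]_{i,j=1}^M and K̂ := [⟨μ̂_i,μ̂_j⟩_H]_{i,j=1}^M satisfy ‖K̂ − K‖₂ ≤ 2√(MC)·ε + ε². -/
/-- Gram matrix of a family of vectors in a real inner product space. -/
noncomputable def gram {H : Type*} [NormedAddCommGroup H] [InnerProductSpace ℝ H]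
    {m : ℕ} (μ : Fin m → H) : Matrix (Fin m) (Fin m) ℝ :=
  Matrix.of fun i j => (inner ℝ (μ i) (μ j) : ℝ)

/-- Spectral norm (`ℓ²`-operator norm) of a real square matrix. -/
noncomputable def spectralNorm2 {m : ℕ} (A : Matrix (Fin m) (Fin m) ℝ) : ℝ :=
  ‖Matrix.toEuclideanCLM (𝕜 := ℝ) A‖

/-!
Write `μ̂ = μ + δ`. By bilinearity `K̂ - K` is the sum of the cross Gram matrices
`[⟪δ i, μ j⟫]`, `[⟪μ i, δ j⟫]` and `[⟪δ i, δ j⟫]`. The spectral norm of a cross Gram matrix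
`[⟪u i, v j⟫]` is at most its Frobenius norm, which by Cauchy–Schwarz in `H` is at most
`(∑ ‖u i‖²)^{1/2} (∑ ‖v j‖²)^{1/2}`; here `(∑ ‖δ i‖²)^{1/2} = ε` and `(∑ ‖μ i‖²)^{1/2} ≤ √(MC)`.
-/

open scoped InnerProductSpace

namespace Matrix

variable {𝕜 : Type*} [RCLike 𝕜] {n : Type*} [Fintype n] [DecidableEq n]

theorem norm_toEuclideanCLM_le_sqrt_sum_sq (A : Matrix n n 𝕜) :
    ‖toEuclideanCLM (𝕜 := 𝕜) A‖ ≤ √(∑ i, ∑ j, ‖A i j‖ ^ 2) := by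
  refine ContinuousLinearMap.opNorm_le_bound _ (Real.sqrt_nonneg _) fun x => ?_
  have hrow : ∀ i, ‖(A *ᵥ x) i‖ ^ 2 ≤ (∑ j, ‖A i j‖ ^ 2) * ∑ j, ‖x j‖ ^ 2 := fun i =>
    calc ‖(A *ᵥ x) i‖ ^ 2 ≤ (∑ j, ‖A i j‖ * ‖x j‖) ^ 2 := by
          gcongr
          exact (norm_sum_le _ _).trans_eq (by simp only [norm_mul])
      _ ≤ (∑ j, ‖A i j‖ ^ 2) * ∑ j, ‖x j‖ ^ 2 := Finset.sum_mul_sq_le_sq_mul_sq _ _ _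
  rw [← Real.sqrt_sq (norm_nonneg x), ← Real.sqrt_mul (by positivity),
    ← Real.sqrt_sq (norm_nonneg _), EuclideanSpace.norm_sq_eq, EuclideanSpace.norm_sq_eq,
    Finset.sum_mul]
  exact Real.sqrt_le_sqrt (Finset.sum_le_sum fun i _ => hrow i)

end Matrix

section CrossGram

variable {H : Type*} [NormedAddCommGroup H] [InnerProductSpace ℝ H] {ι : Type*}

noncomputable def crossGram (u v : ι → H) : Matrix ι ι ℝ :=
  Matrix.of fun i j => ⟪u i, v j⟫_ℝ

theorem crossGram_add_add_sub (u δ : ι → H) :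
    crossGram (u + δ) (u + δ) - crossGram u u =
      crossGram δ u + crossGram u δ + crossGram δ δ := by
  ext i j
  simp only [crossGram, Matrix.sub_apply, Matrix.add_apply, Matrix.of_apply, Pi.add_apply,
    inner_add_left, inner_add_right]
  ring

variable [Fintype ι] [DecidableEq ι]

theorem norm_toEuclideanCLM_crossGram_le (u v : ι → H) :
    ‖Matrix.toEuclideanCLM (𝕜 := ℝ) (crossGram u v)‖ ≤
      √(∑ i, ‖u i‖ ^ 2) * √(∑ j, ‖v j‖ ^ 2) := by
  refine (Matrix.norm_toEuclideanCLM_le_sqrt_sum_sq _).trans ?_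
  rw [← Real.sqrt_mul (by positivity), Finset.sum_mul_sum]
  refine Real.sqrt_le_sqrt (Finset.sum_le_sum fun i _ => Finset.sum_le_sum fun j _ => ?_)
  rw [← mul_pow]
  exact pow_le_pow_left₀ (norm_nonneg _) (norm_inner_le_norm (u i) (v j)) 2

end CrossGram

theorem sqrt_sum_sq_norm_le {E : Type*} [SeminormedAddCommGroup E] {ι : Type*} [Fintype ι]
    {u : ι → E} {r : ℝ} (hr : 0 ≤ r) (hu : ∀ i, ‖u i‖ ≤ r) :
    √(∑ i, ‖u i‖ ^ 2) ≤ √(Fintype.card ι) * r := by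
  calc √(∑ i, ‖u i‖ ^ 2) ≤ √(∑ _i : ι, r ^ 2) :=
        Real.sqrt_le_sqrt (Finset.sum_le_sum fun i _ => pow_le_pow_left₀ (norm_nonneg _) (hu i) 2)
    _ = √(Fintype.card ι) * r := by
        rw [Finset.sum_const, nsmul_eq_mul, Real.sqrt_mul (Nat.cast_nonneg _),
          Real.sqrt_sq hr, Finset.card_univ]

theorem gram_matrix_perturbation_bound_general
    {H : Type*} [NormedAddCommGroup H] [InnerProductSpace ℝ H]
    (M : ℕ) (C : ℝ)
    (μ μhat : Fin M → H) (hμ : ∀ i, ‖μ i‖ ≤ Real.sqrt C)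
    (ε : ℝ) (hε : ε = Real.sqrt (∑ i, ‖μhat i - μ i‖ ^ 2)) :
    spectralNorm2 (gram μhat - gram μ) ≤ 2 * Real.sqrt (M * C) * ε + ε ^ 2 := by
  set δ := μhat - μ
  have hμhat : μhat = μ + δ := (add_sub_cancel μ μhat).symm
  have hδ : √(∑ i, ‖δ i‖ ^ 2) = ε := hε.symm
  have hμ' : √(∑ i, ‖μ i‖ ^ 2) ≤ √(M * C) := by
    rw [Real.sqrt_mul (Nat.cast_nonneg M)]
    simpa using sqrt_sum_sq_norm_le (Real.sqrt_nonneg C) hμ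
  have hε0 : 0 ≤ ε := hδ ▸ Real.sqrt_nonneg _
  let T := Matrix.toEuclideanCLM (n := Fin M) (𝕜 := ℝ)
  calc spectralNorm2 (gram μhat - gram μ)
      = ‖T (crossGram δ μ) + T (crossGram μ δ) + T (crossGram δ δ)‖ := by
        rw [spectralNorm2, hμhat, ← map_add, ← map_add, ← crossGram_add_add_sub]; rfl
    _ ≤ ‖T (crossGram δ μ)‖ + ‖T (crossGram μ δ)‖ + ‖T (crossGram δ δ)‖ := norm_add₃_le
    _ ≤ ε * √(M * C) + √(M * C) * ε + ε * ε := by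
        gcongr
        · exact (norm_toEuclideanCLM_crossGram_le δ μ).trans (by rw [hδ]; gcongr)
        · exact (norm_toEuclideanCLM_crossGram_le μ δ).trans (by rw [hδ]; gcongr)
        · exact (norm_toEuclideanCLM_crossGram_le δ δ).trans_eq (by rw [hδ])
    _ = 2 * √(M * C) * ε + ε ^ 2 := by ring

/-- **Deterministic Gram matrix perturbation bound.**
If `‖μ_i‖ ≤ √C` for all `i` and `ε := (Σ_i ‖μ̂_i − μ_i‖²)^{1/2}`, then
`‖K̂ − K‖₂ ≤ 2√(MC)·ε + ε²`. -/
theorem gram_matrix_perturbation_bound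
    {H : Type*} [NormedAddCommGroup H] [InnerProductSpace ℝ H]
    (M : ℕ) (C : ℝ) (hC : 0 < C)
    (μ μhat : Fin M → H) (hμ : ∀ i, ‖μ i‖ ≤ Real.sqrt C)
    (ε : ℝ) (hε : ε = Real.sqrt (∑ i, ‖μhat i - μ i‖ ^ 2)) :
    spectralNorm2 (gram μhat - gram μ) ≤ 2 * Real.sqrt (M * C) * ε + ε ^ 2 :=
  gram_matrix_perturbation_bound_general M C μ μhat hμ ε hε
end

section
/- Let 𝒜 ⊆ ℝ^M be a nonempty closed convex set, let K, K̂ ∈ ℝ^{M×M} be symmetric matrices with K positive definite (so its smallest eigenvalue λ_min(K) > 0), and let q, q̂ ∈ ℝ^M. Let α* be the unique minimizer of α ↦ αᵀKα − qᵀα over 𝒜, and let α̂* be any minimizer of α ↦ αᵀK̂α − q̂ᵀα over 𝒜. Then ‖α̂* − α*‖₂ ≤ (‖K̂ − K‖₂·‖α̂*‖₂ + ‖q̂ − q‖₂/2) / λ_min(K). -/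
/-!
Adding the first-order optimality conditions of the two programs, each tested against the other
minimizer, gives `2 dᵀKd ≤ (q̂ - q)ᵀd - dᵀ(K̂ - K)α̂ - α̂ᵀ(K̂ - K)d` for `d = α̂* - α*`. The left
side is at least `2 λ_min(K) ‖d‖²` and, by Cauchy–Schwarz, the right side is at most
`(2 ‖K̂ - K‖ ‖α̂*‖ + ‖q̂ - q‖) ‖d‖`; dividing by `2 λ_min(K) ‖d‖` gives the bound.
-/

open Matrix

/-- Euclidean norm of a vector in `ℝ^M`. -/
noncomputable def euclNorm {m : ℕ} (v : Fin m → ℝ) : ℝ := Real.sqrt (∑ i, v i ^ 2)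

open Set Filter Topology
open scoped MatrixOrder

lemma euclNorm_nonneg {m : ℕ} (v : Fin m → ℝ) : 0 ≤ euclNorm v := Real.sqrt_nonneg _

lemma euclNorm_eq_norm_toLp {m : ℕ} (v : Fin m → ℝ) : euclNorm v = ‖WithLp.toLp 2 v‖ := by
  simp [euclNorm, EuclideanSpace.norm_eq]

lemma sq_euclNorm {m : ℕ} (v : Fin m → ℝ) : euclNorm v ^ 2 = v ⬝ᵥ v := by
  rw [euclNorm, Real.sq_sqrt (by positivity)]
  simp [dotProduct, sq]

lemma abs_dotProduct_le {m : ℕ} (u v : Fin m → ℝ) : |u ⬝ᵥ v| ≤ euclNorm u * euclNorm v := by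
  simpa [euclNorm_eq_norm_toLp, EuclideanSpace.inner_eq_star_dotProduct, dotProduct_comm] using
    abs_real_inner_le_norm (WithLp.toLp 2 u) (WithLp.toLp 2 v)

lemma abs_dotProduct_mulVec_le {m : ℕ} (E : Matrix (Fin m) (Fin m) ℝ) (u v : Fin m → ℝ) :
    |u ⬝ᵥ E *ᵥ v| ≤ spectralNorm2 E * euclNorm u * euclNorm v := by
  set T := toEuclideanCLM (𝕜 := ℝ) E
  rw [euclNorm_eq_norm_toLp, euclNorm_eq_norm_toLp, spectralNorm2,
    ← inner_toEuclideanCLM E (WithLp.toLp 2 u) (WithLp.toLp 2 v)]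
  calc _ ≤ ‖WithLp.toLp 2 u‖ * ‖T (WithLp.toLp 2 v)‖ := abs_real_inner_le_norm _ _
    _ ≤ ‖WithLp.toLp 2 u‖ * (‖T‖ * ‖WithLp.toLp 2 v‖) := by gcongr; exact T.le_opNorm _
    _ = ‖T‖ * ‖WithLp.toLp 2 u‖ * ‖WithLp.toLp 2 v‖ := by ring

lemma Matrix.IsHermitian.iInf_eigenvalues_mul_dotProduct_le {n : Type*} [Fintype n]
    [DecidableEq n] {K : Matrix n n ℝ} (hK : K.IsHermitian) (x : n → ℝ) :
    (⨅ i, hK.eigenvalues i) * (x ⬝ᵥ x) ≤ x ⬝ᵥ K *ᵥ x := by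
  have hle : algebraMap ℝ _ (⨅ i, hK.eigenvalues i) ≤ K := by
    rw [algebraMap_le_iff_le_spectrum hK.isSelfAdjoint, hK.spectrum_real_eq_range_eigenvalues]
    rintro _ ⟨i, rfl⟩
    exact ciInf_le (Finite.bddBelow_range _) i
  simpa [sub_mulVec, Algebra.algebraMap_eq_smul_one, smul_mulVec, dotProduct_smul] using
    (Matrix.le_iff.1 hle).dotProduct_mulVec_nonneg x

lemma Matrix.PosDef.iInf_eigenvalues_pos {n : Type*} [Fintype n] [DecidableEq n] [Nonempty n]
    {A : Matrix n n ℝ} (hA : A.PosDef) : 0 < ⨅ i, hA.isHermitian.eigenvalues i := by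
  obtain ⟨i, hi⟩ := exists_eq_ciInf_of_finite (f := hA.isHermitian.eigenvalues)
  exact hi ▸ hA.eigenvalues_pos i

lemma nonneg_of_forall_mem_Ioc_nonneg_add_mul {b c : ℝ}
    (h : ∀ t ∈ Ioc (0 : ℝ) 1, 0 ≤ c + t * b) : 0 ≤ c := by
  have hlim : Tendsto (fun t : ℝ => c + t * b) (𝓝[>] 0) (𝓝 c) := by
    have hcont : Continuous fun t : ℝ => c + t * b := by fun_prop
    simpa using (hcont.tendsto 0).mono_left nhdsWithin_le_nhds
  refine ge_of_tendsto hlim ?_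
  filter_upwards [Ioc_mem_nhdsGT one_pos] with t ht using h t ht

lemma le_div_of_mul_sq_le_mul {N c lam : ℝ} (hN : 0 ≤ N) (hc : 0 ≤ c) (hlam : 0 < lam)
    (h : lam * N ^ 2 ≤ c * N) : N ≤ c / lam := by
  rcases hN.eq_or_lt with rfl | hNpos
  · positivity
  · rw [le_div_iff₀ hlam]
    nlinarith

section QuadraticProgram

variable {n : Type*} [Fintype n]

noncomputable def quadObjective (B : Matrix n n ℝ) (p x : n → ℝ) : ℝ := x ⬝ᵥ B *ᵥ x - p ⬝ᵥ x

lemma quadObjective_add_smul (B : Matrix n n ℝ) (p β u : n → ℝ) (t : ℝ) :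
    quadObjective B p (β + t • u) = quadObjective B p β
      + t * ((u ⬝ᵥ B *ᵥ β + β ⬝ᵥ B *ᵥ u - p ⬝ᵥ u) + t * (u ⬝ᵥ B *ᵥ u)) := by
  simp only [quadObjective, mulVec_add, mulVec_smul, dotProduct_add, add_dotProduct,
    dotProduct_smul, smul_dotProduct, smul_eq_mul]
  ring

/-- `u ↦ uᵀBβ + βᵀBu - pᵀu` is the derivative of the objective at `β`. -/
lemma IsMinOn.quadObjective_variational_inequality {A : Set (n → ℝ)} (hA : Convex ℝ A)
    {B : Matrix n n ℝ} {p β α : n → ℝ} (hmin : IsMinOn (quadObjective B p) A β) (hβ : β ∈ A)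
    (hα : α ∈ A) : 0 ≤ (α - β) ⬝ᵥ B *ᵥ β + β ⬝ᵥ B *ᵥ (α - β) - p ⬝ᵥ (α - β) := by
  refine nonneg_of_forall_mem_Ioc_nonneg_add_mul (b := (α - β) ⬝ᵥ B *ᵥ (α - β)) ?_
  rintro t ⟨ht₀, ht₁⟩
  have hle := isMinOn_iff.1 hmin _ (hA.add_smul_sub_mem hβ hα ⟨ht₀.le, ht₁⟩)
  rw [quadObjective_add_smul, le_add_iff_nonneg_right] at hle
  exact nonneg_of_mul_nonneg_right hle ht₀

lemma two_mul_dotProduct_mulVec_sub_le_of_isMinOn {A : Set (n → ℝ)} (hA : Convex ℝ A)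
    {K Khat : Matrix n n ℝ} {q qhat αstar αhat : n → ℝ}
    (hstar : IsMinOn (quadObjective K q) A αstar) (hstar_mem : αstar ∈ A)
    (hhat : IsMinOn (quadObjective Khat qhat) A αhat) (hhat_mem : αhat ∈ A) :
    2 * ((αhat - αstar) ⬝ᵥ K *ᵥ (αhat - αstar)) ≤
      (qhat - q) ⬝ᵥ (αhat - αstar) - (αhat - αstar) ⬝ᵥ (Khat - K) *ᵥ αhat
        - αhat ⬝ᵥ (Khat - K) *ᵥ (αhat - αstar) := by
  have h₁ := hstar.quadObjective_variational_inequality hA hstar_mem hhat_mem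
  have h₂ := hhat.quadObjective_variational_inequality hA hhat_mem hstar_mem
  simp only [sub_mulVec, mulVec_sub, dotProduct_sub, sub_dotProduct] at h₁ h₂ ⊢
  linarith

end QuadraticProgram

theorem qp_optimizer_perturbation_bound_general
    (M : ℕ) (A : Set (Fin M → ℝ)) (hconv : Convex ℝ A)
    (K Khat : Matrix (Fin M) (Fin M) ℝ)
    (hpd : K.PosDef)
    (q qhat : Fin M → ℝ) (αstar αhat : Fin M → ℝ)
    (hstar_mem : αstar ∈ A)
    (hstar_min : ∀ α ∈ A,
      αstar ⬝ᵥ K.mulVec αstar - q ⬝ᵥ αstar ≤ α ⬝ᵥ K.mulVec α - q ⬝ᵥ α)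
    (hhat_mem : αhat ∈ A)
    (hhat_min : ∀ α ∈ A,
      αhat ⬝ᵥ Khat.mulVec αhat - qhat ⬝ᵥ αhat ≤ α ⬝ᵥ Khat.mulVec α - qhat ⬝ᵥ α) :
    euclNorm (αhat - αstar) ≤
      (spectralNorm2 (Khat - K) * euclNorm αhat + euclNorm (qhat - q) / 2) /
        (⨅ i, hpd.isHermitian.eigenvalues i) := by
  cases isEmpty_or_nonempty (Fin M)
  · simp [euclNorm, Real.iInf_of_isEmpty]
  set d := αhat - αstar
  have hkey := two_mul_dotProduct_mulVec_sub_le_of_isMinOn hconv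
    (isMinOn_iff.2 hstar_min : IsMinOn (quadObjective K q) A αstar) hstar_mem
    (isMinOn_iff.2 hhat_min : IsMinOn (quadObjective Khat qhat) A αhat) hhat_mem
  have hray := hpd.isHermitian.iInf_eigenvalues_mul_dotProduct_le d
  rw [← sq_euclNorm] at hray
  have hq := abs_dotProduct_le (qhat - q) d
  have hK₁ := abs_dotProduct_mulVec_le (Khat - K) d αhat
  have hK₂ := abs_dotProduct_mulVec_le (Khat - K) αhat d
  have hc : 0 ≤ spectralNorm2 (Khat - K) * euclNorm αhat + euclNorm (qhat - q) / 2 :=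
    add_nonneg (mul_nonneg (norm_nonneg _) (euclNorm_nonneg _))
      (div_nonneg (euclNorm_nonneg _) zero_le_two)
  refine le_div_of_mul_sq_le_mul (euclNorm_nonneg d) hc hpd.iInf_eigenvalues_pos ?_
  linarith [le_abs_self ((qhat - q) ⬝ᵥ d), neg_le_abs (d ⬝ᵥ (Khat - K) *ᵥ αhat),
    neg_le_abs (αhat ⬝ᵥ (Khat - K) *ᵥ d)]

/-- **Perturbation bound for constrained quadratic programs.**
Let `A ⊆ ℝ^M` be nonempty, closed and convex, `K, K̂` symmetric with `K`
positive definite, and let `α*`, `α̂*` minimize `α ↦ αᵀKα − qᵀα` resp.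
`α ↦ αᵀK̂α − q̂ᵀα` over `A`. Then
`‖α̂* − α*‖₂ ≤ (‖K̂ − K‖₂·‖α̂*‖₂ + ‖q̂ − q‖₂/2) / λ_min(K)`. -/
theorem qp_optimizer_perturbation_bound
    (M : ℕ) (A : Set (Fin M → ℝ)) (hne : A.Nonempty) (hcl : IsClosed A) (hconv : Convex ℝ A)
    (K Khat : Matrix (Fin M) (Fin M) ℝ) (hKs : K.IsSymm) (hKhs : Khat.IsSymm)
    (hpd : K.PosDef)
    (q qhat : Fin M → ℝ) (αstar αhat : Fin M → ℝ)
    (hstar_mem : αstar ∈ A)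
    (hstar_min : ∀ α ∈ A,
      αstar ⬝ᵥ K.mulVec αstar - q ⬝ᵥ αstar ≤ α ⬝ᵥ K.mulVec α - q ⬝ᵥ α)
    (hstar_uniq : ∀ β ∈ A,
      (∀ α ∈ A, β ⬝ᵥ K.mulVec β - q ⬝ᵥ β ≤ α ⬝ᵥ K.mulVec α - q ⬝ᵥ α) → β = αstar)
    (hhat_mem : αhat ∈ A)
    (hhat_min : ∀ α ∈ A,
      αhat ⬝ᵥ Khat.mulVec αhat - qhat ⬝ᵥ αhat ≤ α ⬝ᵥ Khat.mulVec α - qhat ⬝ᵥ α) :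
    euclNorm (αhat - αstar) ≤
      (spectralNorm2 (Khat - K) * euclNorm αhat + euclNorm (qhat - q) / 2) /
        (⨅ i, hpd.isHermitian.eigenvalues i) :=
  qp_optimizer_perturbation_bound_general M A hconv K Khat hpd q qhat αstar αhat hstar_mem hstar_min
    hhat_mem hhat_min
end
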